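/- arXiv:2210.10968 — 15 statements merged into one kernel-verified Lean document; each statement's English description precedes it below -/
import Mathlib

section
/- There exists a unique continuous function φ on [0,1] with φ(0)=0, φ(1)=1 satisfying φ(t) = (β/(α+β))·φ(2t) for t ∈ [0,1/2] and φ(t) = (α/(α+β))·φ(2t−1) + β/(α+β) for t ∈ [1/2,1]; moreover φ is strictly increasing. -/
/-- The defining self-affine system for the interpolation function `φ` associated
with parameters `α, β`. -/
def IsInterp (α β : ℝ) (φ : ℝ → ℝ) : Prop :=
  ContinuousOn φ (Set.Icc 0 1) ∧ φ 0 = 0 ∧ φ 1 = 1 ∧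
  (∀ t ∈ Set.Icc (0 : ℝ) (1 / 2), φ t = β / (α + β) * φ (2 * t)) ∧
  (∀ t ∈ Set.Icc (1 / 2 : ℝ) 1, φ t = α / (α + β) * φ (2 * t - 1) + β / (α + β))

/-!
The solutions are the fixed points, among continuous `f : [0,1] → ℝ` with `f 0 = 0` and
`f 1 = 1`, of the operator `T` given by the right-hand sides of the system. With
`a = α/(α+β)` and `b = β/(α+β)`, `T` is a contraction with constant `max a b < 1` in the sup
metric, so Banach's theorem gives existence and uniqueness. `T` preserves monotonicity, so the
fixed point, as the uniform limit of `Tⁿ id`, is monotone. Strictness comes from the dyadic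
points: `φ (k/2ⁿ) < φ ((k+1)/2ⁿ)` by induction on `n` (the system rescales each half of `[0,1]`
onto `[0,1]` by a positive factor), and every interval `[s, t]` with `s < t` contains a
dyadic interval of this form.
-/

open Set Function Filter Topology unitInterval

noncomputable section

def pinned : Set C(I, ℝ) := {f | f 0 = 0 ∧ f 1 = 1}

theorem isClosed_pinned : IsClosed pinned :=
  (isClosed_eq (continuous_eval_const 0) continuous_const).inter
    (isClosed_eq (continuous_eval_const 1) continuous_const)

/-- Since `IccExtend` clamps, `f (2t - 1) = f 0` for `t ≤ 1/2` and `f (2t) = f 1` for `t ≥ 1/2`: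
on `pinned` this is the two-piece system, and no case split is needed for continuity. -/
def interpOp (a b : ℝ) (f : C(I, ℝ)) : C(I, ℝ) where
  toFun t := b * IccExtend zero_le_one f (2 * t) + a * (IccExtend zero_le_one f (2 * t - 1) - f 0)
  continuous_toFun := by
    have := continuous_IccExtend_iff (h := zero_le_one' ℝ) |>.2 f.continuous
    fun_prop

section interpOp

variable {a b : ℝ} {f g : C(I, ℝ)} {t : I}

theorem interpOp_apply_of_le_half (ht : (t : ℝ) ≤ 1 / 2) :
    interpOp a b f t = b * IccExtend zero_le_one f (2 * t) := by
  have : IccExtend zero_le_one f (2 * t - 1) = f 0 := IccExtend_of_le_left _ _ (by linarith)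
  simp [interpOp, this]

theorem interpOp_apply_of_half_le (hf : f ∈ pinned) (ht : 1 / 2 ≤ (t : ℝ)) :
    interpOp a b f t = a * IccExtend zero_le_one f (2 * t - 1) + b := by
  have : IccExtend zero_le_one f (2 * t) = f 1 := IccExtend_of_right_le _ _ (by linarith)
  simp only [interpOp, ContinuousMap.coe_mk, this, hf.1, hf.2]
  ring

theorem mapsTo_interpOp (hab : a + b = 1) : MapsTo (interpOp a b) pinned pinned := by
  intro f hf
  refine ⟨?_, ?_⟩
  · rw [interpOp_apply_of_le_half (t := 0) (by norm_num)]
    simp [hf.1]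
  · rw [interpOp_apply_of_half_le (t := 1) hf (by norm_num)]
    norm_num [IccExtend_right, Icc.mk_one, hf.2, hab]

theorem dist_interpOp_le (ha : 0 ≤ a) (hb : 0 ≤ b) (hf : f ∈ pinned) (hg : g ∈ pinned) :
    dist (interpOp a b f) (interpOp a b g) ≤ max a b * dist f g := by
  refine (ContinuousMap.dist_le (by positivity)).2 fun t => ?_
  have hext (x : ℝ) : |IccExtend zero_le_one f x - IccExtend zero_le_one g x| ≤ dist f g :=
    (Real.dist_eq _ _).symm.trans_le (ContinuousMap.dist_apply_le_dist _)
  rw [Real.dist_eq]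
  rcases le_total (t : ℝ) (1 / 2) with ht | ht
  · rw [interpOp_apply_of_le_half ht, interpOp_apply_of_le_half ht, ← mul_sub, abs_mul,
      abs_of_nonneg hb]
    exact mul_le_mul (le_max_right a b) (hext _) (abs_nonneg _) (by positivity)
  · rw [interpOp_apply_of_half_le hf ht, interpOp_apply_of_half_le hg ht, add_sub_add_right_eq_sub,
      ← mul_sub, abs_mul, abs_of_nonneg ha]
    exact mul_le_mul (le_max_left a b) (hext _) (abs_nonneg _) (by positivity)

theorem monotone_interpOp (ha : 0 ≤ a) (hb : 0 ≤ b) (hf : f ∈ pinned) (hmono : Monotone f) :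
    Monotone (interpOp a b f) := by
  have hF : Monotone (IccExtend zero_le_one f) := hmono.IccExtend _
  have hF_le (x : ℝ) : IccExtend zero_le_one f x ≤ 1 := (hmono le_one').trans_eq hf.2
  have hF_nonneg (x : ℝ) : 0 ≤ IccExtend zero_le_one f x := hf.1.symm.trans_le (hmono nonneg')
  intro s t hst
  have hst : (s : ℝ) ≤ t := hst
  rcases le_total (t : ℝ) (1 / 2) with ht | ht
  · rw [interpOp_apply_of_le_half (hst.trans ht), interpOp_apply_of_le_half ht]
    gcongr
    exact hF (by linarith)
  rcases le_total (s : ℝ) (1 / 2) with hs | hs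
  · rw [interpOp_apply_of_le_half hs, interpOp_apply_of_half_le hf ht]
    nlinarith [hF_le (2 * s), hF_nonneg (2 * t - 1)]
  · rw [interpOp_apply_of_half_le hf hs, interpOp_apply_of_half_le hf ht]
    gcongr
    exact hF (by linarith)

theorem contractingWith_interpOp (ha : 0 < a) (hb : 0 < b) (hab : a + b = 1) :
    ContractingWith (max a b).toNNReal ((mapsTo_interpOp hab).restrict _ _ _) :=
  ⟨Real.toNNReal_lt_one.2 (max_lt (by linarith) (by linarith)),
    LipschitzWith.of_dist_le' fun f g => dist_interpOp_le ha.le hb.le f.2 g.2⟩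

theorem exists_monotone_isFixedPt_interpOp (ha : 0 < a) (hb : 0 < b) (hab : a + b = 1) :
    ∃ φ ∈ pinned, IsFixedPt (interpOp a b) φ ∧ Monotone φ := by
  let x₀ : C(I, ℝ) := ⟨Subtype.val, continuous_subtype_val⟩
  have hx₀ : x₀ ∈ pinned := ⟨rfl, rfl⟩
  obtain ⟨φ, hφ, hfix, hlim, -⟩ := (contractingWith_interpOp ha hb hab).exists_fixedPoint'
    isClosed_pinned.isComplete (mapsTo_interpOp hab) hx₀ (edist_ne_top _ _)
  refine ⟨φ, hφ, hfix, monotone_of_frequently_monotone_of_tendsto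
    (F := fun n => ⇑((interpOp a b)^[n] x₀)) (Frequently.of_forall fun n => ?_)
    fun t => ((continuous_eval_const t).tendsto φ).comp hlim⟩
  induction n with
  | zero => exact fun s t hst => hst
  | succ n ih =>
    rw [Function.iterate_succ_apply']
    exact monotone_interpOp ha.le hb.le ((mapsTo_interpOp hab).iterate n hx₀) ih

theorem eq_of_isFixedPt_interpOp (ha : 0 < a) (hb : 0 < b) (hab : a + b = 1) (hf : f ∈ pinned)
    (hg : g ∈ pinned) (hf' : IsFixedPt (interpOp a b) f) (hg' : IsFixedPt (interpOp a b) g) :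
    f = g := by
  have h := dist_interpOp_le ha.le hb.le hf hg
  rw [hf'.eq, hg'.eq] at h
  have : max a b < 1 := max_lt (by linarith) (by linarith)
  exact dist_le_zero.1 (by nlinarith [dist_nonneg (x := f) (y := g)])

end interpOp

theorem isInterp_IccExtend {α β : ℝ} {f : C(I, ℝ)} (hf : f ∈ pinned)
    (hfix : IsFixedPt (interpOp (α / (α + β)) (β / (α + β))) f) :
    IsInterp α β (IccExtend zero_le_one f) := by
  have hF (t : ℝ) (ht : t ∈ Icc 0 1) :
      IccExtend zero_le_one f t = interpOp (α / (α + β)) (β / (α + β)) f ⟨t, ht⟩ := by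
    rw [IccExtend_of_mem _ _ ht]
    exact (DFunLike.congr_fun hfix _).symm
  refine ⟨(continuous_IccExtend_iff.2 f.continuous).continuousOn, by simpa using hf.1,
    by simpa using hf.2, fun t ht => ?_, fun t ht => ?_⟩
  · rw [hF t ⟨ht.1, by linarith [ht.2]⟩, interpOp_apply_of_le_half ht.2]
  · rw [hF t ⟨by linarith [ht.1], ht.2⟩, interpOp_apply_of_half_le hf ht.1]

theorem IsInterp.exists_isFixedPt_interpOp {α β : ℝ} {ψ : ℝ → ℝ} (h : IsInterp α β ψ) :
    ∃ f ∈ pinned, IsFixedPt (interpOp (α / (α + β)) (β / (α + β))) f ∧ ∀ t : I, f t = ψ t := by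
  obtain ⟨hc, h0, h1, hleft, hright⟩ := h
  let f : C(I, ℝ) := ⟨(Icc 0 1).domRestrict ψ, hc.domRestrict⟩
  have hf : f ∈ pinned := ⟨h0, h1⟩
  have hF (x : ℝ) (hx : x ∈ Icc 0 1) : IccExtend zero_le_one f x = ψ x := IccExtend_of_mem _ _ hx
  refine ⟨f, hf, ContinuousMap.ext fun t => ?_, fun t => rfl⟩
  rcases le_total (t : ℝ) (1 / 2) with ht | ht
  · rw [interpOp_apply_of_le_half ht, hF _ ⟨by linarith [t.2.1], by linarith⟩]
    exact (hleft t ⟨t.2.1, ht⟩).symm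
  · rw [interpOp_apply_of_half_le hf ht, hF _ ⟨by linarith, by linarith [t.2.2]⟩]
    exact (hright t ⟨ht, t.2.2⟩).symm

theorem IsInterp.lt_dyadic {α β : ℝ} {φ : ℝ → ℝ} (hα : 0 < α) (hβ : 0 < β) (h : IsInterp α β φ)
    (n : ℕ) : ∀ k : ℕ, k + 1 ≤ 2 ^ n → φ (k / 2 ^ n) < φ ((k + 1) / 2 ^ n) := by
  obtain ⟨-, h0, h1, hleft, hright⟩ := h
  have hαβ : 0 < α + β := add_pos hα hβ
  induction n with
  | zero =>
    intro k hk
    obtain rfl : k = 0 := by simpa using hk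
    simp [h0, h1]
  | succ n ih =>
    intro k hk
    have h2n : (0 : ℝ) < 2 ^ n := by positivity
    have hpow : (2 : ℝ) ^ (n + 1) = 2 * 2 ^ n := pow_succ' 2 n
    rcases le_or_gt (k + 1) (2 ^ n) with hkn | hkn
    · have hkn' : (k : ℝ) + 1 ≤ 2 ^ n := by exact_mod_cast hkn
      have hhalf (x : ℝ) (hx0 : 0 ≤ x) (hx : x ≤ 2 ^ n) : x / 2 ^ (n + 1) ∈ Icc 0 (1 / 2) :=
        ⟨by positivity, by rw [div_le_iff₀ (by positivity)]; linarith⟩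
      have hdouble (x : ℝ) : 2 * (x / 2 ^ (n + 1)) = x / 2 ^ n := by
        rw [hpow]; field_simp
      rw [hleft _ (hhalf k (by positivity) (by linarith)),
        hleft _ (hhalf (k + 1) (by positivity) hkn'), hdouble, hdouble]
      gcongr
      exact ih k hkn
    · obtain ⟨j, rfl⟩ := Nat.exists_eq_add_of_le (Nat.lt_succ_iff.1 hkn)
      have hj : j + 1 ≤ 2 ^ n := by rw [pow_succ] at hk; omega
      have hj' : (j : ℝ) + 1 ≤ 2 ^ n := by exact_mod_cast hj
      have hupper (y : ℝ) (hy0 : 0 ≤ y) (hy : y ≤ 2 ^ n) :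
          (2 ^ n + y) / 2 ^ (n + 1) ∈ Icc (1 / 2) 1 :=
        ⟨by rw [le_div_iff₀ (by positivity)]; linarith,
          by rw [div_le_iff₀ (by positivity)]; linarith⟩
      have hdouble (y : ℝ) : 2 * ((2 ^ n + y) / 2 ^ (n + 1)) - 1 = y / 2 ^ n := by
        rw [hpow]; field_simp; ring
      push_cast
      rw [add_assoc, hright _ (hupper j (by positivity) (by linarith)),
        hright _ (hupper (j + 1) (by positivity) hj'), hdouble, hdouble]
      gcongr
      exact ih j hj

theorem exists_dyadic_Icc_subset {s t : ℝ} (hs : 0 ≤ s) (hst : s < t) :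
    ∃ n k : ℕ, s ≤ k / 2 ^ n ∧ (k + 1) / 2 ^ n ≤ t := by
  obtain ⟨n, hn⟩ := pow_unbounded_of_one_lt (2 / (t - s)) one_lt_two
  have h2n : (0 : ℝ) < 2 ^ n := by positivity
  rw [div_lt_iff₀ (sub_pos.2 hst)] at hn
  refine ⟨n, ⌈s * 2 ^ n⌉₊, (le_div_iff₀ h2n).2 (Nat.le_ceil _), (div_le_iff₀ h2n).2 ?_⟩
  nlinarith [Nat.ceil_lt_add_one (mul_nonneg hs h2n.le)]

theorem strictMonoOn_of_lt_dyadic {φ : ℝ → ℝ} (hmono : MonotoneOn φ (Icc 0 1))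
    (hdy : ∀ n k : ℕ, k + 1 ≤ 2 ^ n → φ (k / 2 ^ n) < φ ((k + 1) / 2 ^ n)) :
    StrictMonoOn φ (Icc 0 1) := by
  intro s hs t ht hst
  obtain ⟨n, k, hsk, hkt⟩ := exists_dyadic_Icc_subset hs.1 hst
  have hk : ((k + 1 : ℕ) : ℝ) ≤ 2 ^ n := by
    push_cast
    exact (div_le_one (by positivity)).1 (hkt.trans ht.2)
  have hkk : (k : ℝ) / 2 ^ n ≤ (k + 1) / 2 ^ n := by gcongr; linarith
  calc φ s ≤ φ (k / 2 ^ n) := hmono hs ⟨by positivity, by linarith [ht.2]⟩ hsk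
    _ < φ ((k + 1) / 2 ^ n) := hdy n k (by exact_mod_cast hk)
    _ ≤ φ t := hmono ⟨by positivity, hkt.trans ht.2⟩ ht hkt

/-- There exists a unique continuous function `φ` on `[0,1]` with `φ 0 = 0`, `φ 1 = 1`
satisfying the self-affine system; moreover `φ` is strictly increasing on `[0,1]`. -/
theorem exists_unique_interp (α β : ℝ) (hα : 0 < α) (hβ : 0 < β) :
    ∃ φ : ℝ → ℝ, IsInterp α β φ ∧ StrictMonoOn φ (Set.Icc 0 1) ∧
      ∀ ψ : ℝ → ℝ, IsInterp α β ψ → Set.EqOn ψ φ (Set.Icc 0 1) := by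
  have hαβ : 0 < α + β := add_pos hα hβ
  have ha := div_pos hα hαβ
  have hb := div_pos hβ hαβ
  have hab : α / (α + β) + β / (α + β) = 1 := by field_simp
  obtain ⟨f, hf, hfix, hmono⟩ := exists_monotone_isFixedPt_interpOp ha hb hab
  have hφ := isInterp_IccExtend hf hfix
  refine ⟨_, hφ,
    strictMonoOn_of_lt_dyadic ((hmono.IccExtend _).monotoneOn _) (hφ.lt_dyadic hα hβ),
    fun ψ hψ t ht => ?_⟩
  obtain ⟨g, hg, hgfix, hgψ⟩ := hψ.exists_isFixedPt_interpOp
  rw [IccExtend_of_mem _ _ ht, ← eq_of_isFixedPt_interpOp ha hb hab hg hf hgfix hfix, hgψ]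
end
end

section
/- For α, β > 0, define φ(Σ_{k≥1} 2^{−e_k}) := Σ_{k≥1} α^{k−1} β^{e_k−k+1} / (α+β)^{e_k} for any finite or infinite strictly increasing sequence 1 ≤ e₁ < e₂ < ⋯. Then φ is well defined on [0,1]: the two binary representations of any dyadic rational give the same value. -/
/-! The infinite expansion replaces the last digit `2^{-e}` of the finite one by
`Σ_{j≥0} 2^{-(e+1+j)}`. In `φ` this becomes the identity `1 = Σ_{j≥0} α^j β / (α+β)^{j+1}`,
a geometric series of ratio `α / (α+β)`, scaled by the weight of the replaced term. -/

theorem tsum_pow_mul_div_pow_succ_eq_one {α β : ℝ} (hα : 0 ≤ α) (hβ : 0 < β) :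
    ∑' j : ℕ, α ^ j * β / (α + β) ^ (j + 1) = 1 := by
  have hαβ : 0 < α + β := by linarith
  have hratio : α / (α + β) < 1 := (div_lt_one hαβ).2 (by linarith)
  have hterm : ∀ j : ℕ, α ^ j * β / (α + β) ^ (j + 1) = β / (α + β) * (α / (α + β)) ^ j := by
    intro j
    rw [div_pow, pow_succ]
    field_simp
  rw [tsum_congr hterm, tsum_mul_left, tsum_geometric_of_lt_one (by positivity) hratio,
    one_sub_div hαβ.ne', add_sub_cancel_left, inv_div, div_mul_div_cancel₀ hαβ.ne',
    div_self hβ.ne']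

theorem tsum_pow_add_mul_div_pow_add_succ {α β : ℝ} (hα : 0 ≤ α) (hβ : 0 < β) (m n p : ℕ) :
    ∑' j : ℕ, α ^ (m + j) * β ^ (n + 1) / (α + β) ^ (p + j + 1)
      = α ^ m * β ^ n / (α + β) ^ p := by
  have hαβ : α + β ≠ 0 := by positivity
  have hterm : ∀ j : ℕ, α ^ (m + j) * β ^ (n + 1) / (α + β) ^ (p + j + 1)
      = α ^ m * β ^ n / (α + β) ^ p * (α ^ j * β / (α + β) ^ (j + 1)) := by
    intro j
    rw [pow_add, pow_succ, add_assoc, pow_add (α + β) p]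
    field_simp
  rw [tsum_congr hterm, tsum_mul_left, tsum_pow_mul_div_pow_succ_eq_one hα hβ, mul_one]

theorem phi_digital_sum_well_defined_general (α β : ℝ) (hα : 0 < α) (hβ : 0 < β)
    (K : ℕ) (hK : 1 ≤ K) (e : ℕ → ℕ) :
    ∑ i ∈ Finset.range K, α ^ i * β ^ (e i - i) / (α + β) ^ (e i)
      = (∑ i ∈ Finset.range (K - 1), α ^ i * β ^ (e i - i) / (α + β) ^ (e i))
        + ∑' j : ℕ,
            α ^ (K - 1 + j) * β ^ (e (K - 1) - (K - 1) + 1)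
              / (α + β) ^ (e (K - 1) + j + 1) := by
  obtain ⟨m, rfl⟩ : ∃ m, K = m + 1 := ⟨K - 1, (Nat.sub_add_cancel hK).symm⟩
  rw [Nat.add_sub_cancel, Finset.sum_range_succ,
    tsum_pow_add_mul_div_pow_add_succ hα.le hβ m (e m - m) (e m)]

/-- Well-definedness of the digital-sum formula for `φ`: the finite and the infinite
binary representation of a dyadic rational `t = Σ_{k≥1} 2^{−e_k}` yield the same value
`Σ_{k≥1} α^{k−1} β^{e_k−k+1} / (α+β)^{e_k}`.  With 0-indexed exponents
`e : ℕ → ℕ` (strictly increasing, `e i > i`), replacing the last term of the finite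
representation of length `K` by the corresponding infinite tail gives the same sum. -/
theorem phi_digital_sum_well_defined (α β : ℝ) (hα : 0 < α) (hβ : 0 < β)
    (K : ℕ) (hK : 1 ≤ K) (e : ℕ → ℕ) (he : StrictMono e) (he' : ∀ i, i < e i) :
    ∑ i ∈ Finset.range K, α ^ i * β ^ (e i - i) / (α + β) ^ (e i)
      = (∑ i ∈ Finset.range (K - 1), α ^ i * β ^ (e i - i) / (α + β) ^ (e i))
        + ∑' j : ℕ,
            α ^ (K - 1 + j) * β ^ (e (K - 1) - (K - 1) + 1)
              / (α + β) ^ (e (K - 1) + j + 1) :=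
  phi_digital_sum_well_defined_general α β hα hβ K hK e
end

section
/- Let α, β > 0 and let φ be the unique continuous solution of φ(t) = (β/(α+β))φ(2t) on [0,1/2], φ(t) = β/(α+β) + (α/(α+β))φ(2t−1) on [1/2,1] with φ(0)=0, φ(1)=1. If t = Σ_{j=1}^{N} b_j 2^{−j} is a dyadic rational in [0,1) with digits b_j ∈ {0,1} and s := Σ_{j=1}^{N} b_j, then φ(t + 2^{−N}) − φ(t) = α^s β^{N−s} / (α+β)^N. -/
/-!
By the functional equation, the increment of `φ` over a dyadic interval in the left (right)
half of `[0, 1]` is `β / (α + β)` (resp. `α / (α + β)`) times its increment over the doubled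
interval. Peeling off the first binary digit and inducting on `N`, the increment over
`[t, t + 2⁻ᴺ]` is the product of these factors along the digits of `t`, times `φ 1 - φ 0 = 1`.
-/

open Finset

namespace IsInterp

variable {α β : ℝ} {φ : ℝ → ℝ}

theorem apply_half (hφ : IsInterp α β φ) {x : ℝ} (hx : x ∈ Set.Icc 0 1) :
    φ (x / 2) = β / (α + β) * φ x := by
  have hmem : x / 2 ∈ Set.Icc (0 : ℝ) (1 / 2) := ⟨by linarith [hx.1], by linarith [hx.2]⟩
  rw [hφ.2.2.2.1 _ hmem, mul_div_cancel₀ x two_ne_zero]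

theorem apply_half_add_half (hφ : IsInterp α β φ) {x : ℝ} (hx : x ∈ Set.Icc 0 1) :
    φ (1 / 2 + x / 2) = α / (α + β) * φ x + β / (α + β) := by
  have hmem : 1 / 2 + x / 2 ∈ Set.Icc (1 / 2 : ℝ) 1 := ⟨by linarith [hx.1], by linarith [hx.2]⟩
  rw [hφ.2.2.2.2 _ hmem]
  ring_nf

end IsInterp

noncomputable def dyadicSum (b : ℕ → Bool) (N : ℕ) : ℝ :=
  ∑ j ∈ range N, if b j then (1 / 2 : ℝ) ^ (j + 1) else 0

theorem dyadicSum_nonneg (b : ℕ → Bool) (N : ℕ) : 0 ≤ dyadicSum b N :=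
  sum_nonneg fun j _ => by positivity

theorem dyadicSum_add_le_one (b : ℕ → Bool) (N : ℕ) : dyadicSum b N + (1 / 2) ^ N ≤ 1 := by
  have hgeom : ∑ j ∈ range N, (1 / 2 : ℝ) ^ (j + 1) = 1 - (1 / 2) ^ N := by
    induction N with
    | zero => simp
    | succ n ih => rw [sum_range_succ, ih]; ring
  have hle : dyadicSum b N ≤ ∑ j ∈ range N, (1 / 2 : ℝ) ^ (j + 1) :=
    sum_le_sum fun j _ => by split_ifs <;> [exact le_rfl; positivity]
  linarith

theorem dyadicSum_succ (b : ℕ → Bool) (N : ℕ) :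
    dyadicSum b (N + 1) = (if b 0 then 1 / 2 else 0) + dyadicSum (fun j => b (j + 1)) N / 2 := by
  rw [dyadicSum, sum_range_succ', add_comm, dyadicSum, sum_div]
  congr 1
  · simp
  · refine sum_congr rfl fun j _ => ?_
    split_ifs <;> ring

theorem IsInterp.sub_dyadicSum_eq_prod {α β : ℝ} {φ : ℝ → ℝ} (hφ : IsInterp α β φ)
    (N : ℕ) (b : ℕ → Bool) :
    φ (dyadicSum b N + (1 / 2) ^ N) - φ (dyadicSum b N)
      = ∏ j ∈ range N, (if b j then α else β) / (α + β) := by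
  induction N generalizing b with
  | zero => simp [dyadicSum, hφ.2.1, hφ.2.2.1]
  | succ N ih =>
    set t := dyadicSum (fun j => b (j + 1)) N
    have hpow : (0 : ℝ) < (1 / 2) ^ N := by positivity
    have hle := dyadicSum_add_le_one (fun j => b (j + 1)) N
    have ht : t ∈ Set.Icc (0 : ℝ) 1 := ⟨dyadicSum_nonneg _ N, by linarith⟩
    have hu : t + (1 / 2) ^ N ∈ Set.Icc (0 : ℝ) 1 := ⟨by linarith [ht.1], hle⟩
    have hhalf : t / 2 + (1 / 2) ^ (N + 1) = (t + (1 / 2) ^ N) / 2 := by ring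
    rw [dyadicSum_succ, prod_range_succ', ← ih]
    cases b 0
    · simp only [Bool.false_eq_true, if_false, zero_add]
      rw [hhalf, hφ.apply_half ht, hφ.apply_half hu]
      ring
    · simp only [if_true]
      rw [add_assoc, hhalf, hφ.apply_half_add_half ht, hφ.apply_half_add_half hu]
      ring

theorem prod_ite_eq_pow_mul_pow {ι M : Type*} [CommMonoid M] (s : Finset ι) (p : ι → Prop)
    [DecidablePred p] (a b : M) :
    ∏ i ∈ s, (if p i then a else b) = a ^ #(s.filter p) * b ^ (#s - #(s.filter p)) := by
  rw [prod_ite, prod_const, prod_const, ← card_filter_add_card_filter_not (s := s) p,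
    Nat.add_sub_cancel_left]

theorem phi_dyadic_increment_general (α β : ℝ)
    (φ : ℝ → ℝ) (hφ : IsInterp α β φ)
    (N : ℕ) (b : ℕ → Bool) :
    φ ((∑ j ∈ Finset.range N, if b j then ((1 : ℝ) / 2) ^ (j + 1) else 0)
          + (1 / 2) ^ N)
      - φ (∑ j ∈ Finset.range N, if b j then ((1 : ℝ) / 2) ^ (j + 1) else 0)
      = α ^ ((Finset.range N).filter (fun j => b j = true)).card
          * β ^ (N - ((Finset.range N).filter (fun j => b j = true)).card)
          / (α + β) ^ N := by
  have h := hφ.sub_dyadicSum_eq_prod N b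
  rw [prod_div_distrib, prod_const, card_range, prod_ite_eq_pow_mul_pow, card_range] at h
  exact h

/-- If `t = Σ_{j=1}^{N} b_j 2^{−j}` is a dyadic rational in `[0,1)` with digits
`b_j ∈ {0,1}` and `s` ones among them, then
`φ(t + 2^{−N}) − φ(t) = α^s β^{N−s} / (α+β)^N`. -/
theorem phi_dyadic_increment (α β : ℝ) (hα : 0 < α) (hβ : 0 < β)
    (φ : ℝ → ℝ) (hφ : IsInterp α β φ)
    (N : ℕ) (b : ℕ → Bool) :
    φ ((∑ j ∈ Finset.range N, if b j then ((1 : ℝ) / 2) ^ (j + 1) else 0)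
          + (1 / 2) ^ N)
      - φ (∑ j ∈ Finset.range N, if b j then ((1 : ℝ) / 2) ^ (j + 1) else 0)
      = α ^ ((Finset.range N).filter (fun j => b j = true)).card
          * β ^ (N - ((Finset.range N).filter (fun j => b j = true)).card)
          / (α + β) ^ N :=
  phi_dyadic_increment_general α β φ hφ N b
end

section
/- Let α, β > 0 and φ the unique continuous solution of the self-affine system φ(t) = (β/(α+β))φ(2t) on [0,1/2], φ(t) = β/(α+β) + (α/(α+β))φ(2t−1) on [1/2,1] with φ(0)=0, φ(1)=1. Then ∫₀¹ φ(x) dx = β/(α+β). -/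
open Set intervalIntegral
open MeasureTheory (volume)

theorem integral_half_interval_of_self_affine {φ : ℝ → ℝ} (hφ : IntervalIntegrable φ volume 0 1)
    {a b s : ℝ} (h : EqOn φ (fun t ↦ a * φ (2 * t - s) + b) (Icc (s / 2) ((s + 1) / 2))) :
    ∫ x in s / 2..(s + 1) / 2, φ x = (a * (∫ x in 0..1, φ x) + b) / 2 := by
  rw [integral_congr (by rwa [uIcc_of_le (by linarith)]),
    integral_comp_mul_sub (fun u ↦ a * φ u + b) two_ne_zero s]
  have h₀ : 2 * (s / 2) - s = 0 := by ring
  have h₁ : 2 * ((s + 1) / 2) - s = 1 := by ring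
  rw [h₀, h₁, integral_add (hφ.const_mul a) intervalIntegrable_const, integral_const_mul,
    integral_const, sub_zero, smul_eq_mul, smul_eq_mul]
  ring

/-- With `α + β = 0` both coefficients are junk zeros, and the system would force `φ 1 = 0`. -/
theorem IsInterp.add_ne_zero {α β : ℝ} {φ : ℝ → ℝ} (hφ : IsInterp α β φ) : α + β ≠ 0 := by
  obtain ⟨-, -, h₁, -, hR⟩ := hφ
  intro hαβ
  simpa [hαβ, h₁] using hR 1 (by norm_num)

theorem integral_phi_general (α β : ℝ)
    (φ : ℝ → ℝ) (hφ : IsInterp α β φ) :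
    ∫ x in (0 : ℝ)..1, φ x = β / (α + β) := by
  have hαβ := hφ.add_ne_zero
  obtain ⟨hc, -, -, hL, hR⟩ := hφ
  have hint : IntervalIntegrable φ volume 0 1 := hc.intervalIntegrable_of_Icc zero_le_one
  have left := integral_half_interval_of_self_affine hint (a := β / (α + β)) (b := 0) (s := 0)
    fun t ht ↦ by simpa using hL t (by simpa using ht)
  have right := integral_half_interval_of_self_affine hint (s := 1)
    fun t ht ↦ hR t (by simpa using ht)
  norm_num at left right
  have half_mem : (1 / 2 : ℝ) ∈ uIcc 0 1 := by rw [uIcc_of_le zero_le_one]; norm_num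
  have split := integral_add_adjacent_intervals
    (hint.mono_set (uIcc_subset_uIcc left_mem_uIcc half_mem))
    (hint.mono_set (uIcc_subset_uIcc half_mem right_mem_uIcc))
  have coeff_sum : α / (α + β) + β / (α + β) = 1 := by field_simp
  linear_combination -2 * split + 2 * left + 2 * right + (∫ x in (0 : ℝ)..1, φ x) * coeff_sum

/-- `∫₀¹ φ(x) dx = β/(α+β)`. -/
theorem integral_phi (α β : ℝ) (hα : 0 < α) (hβ : 0 < β)
    (φ : ℝ → ℝ) (hφ : IsInterp α β φ) :
    ∫ x in (0 : ℝ)..1, φ x = β / (α + β) :=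
  integral_phi_general α β φ hφ
end

section
/- Let α, β > 0, λ := log₂((α+β)/max(α,β)) ∈ (0,1], and φ the interpolation function for (α,β). Then φ is Hölder continuous with exponent λ on [0,1]: there is a constant C such that |φ(y) − φ(x)| ≤ C|y−x|^λ for all x, y ∈ [0,1]. -/
/-!
On `[0, 1/2]` and `[1/2, 1]` the graph of `φ` is a copy of the whole graph, contracted by `1/2`
horizontally and by `β/(α+β)`, resp. `α/(α+β)`, vertically. Iterating, the oscillation of `φ` on
a dyadic interval of length `2⁻ⁿ` is at most `(max α β/(α+β))ⁿ = 2^(-λ n)` times its oscillation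
on `[0,1]`; two points at distance `d` lie in at most two adjacent dyadic intervals of length
`2⁻ⁿ ≈ d`, so `|φ y - φ x| ≲ d ^ λ`.
-/

open Set

lemma one_lt_add_div_max {a b : ℝ} (ha : 0 < a) (hb : 0 < b) : 1 < (a + b) / max a b := by
  rw [one_lt_div (lt_max_of_lt_left ha)]
  rcases max_cases a b with ⟨h, _⟩ | ⟨h, _⟩ <;> linarith

lemma add_div_max_le_two {a b : ℝ} (ha : 0 < a) : (a + b) / max a b ≤ 2 := by
  rw [div_le_iff₀ (lt_max_of_lt_left ha)]
  linarith [le_max_left a b, le_max_right a b]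

section SelfAffine

variable {φ : ℝ → ℝ} {p q c r M : ℝ}
  (hL : ∀ t ∈ Icc (0 : ℝ) (1 / 2), φ t = p * φ (2 * t))
  (hR : ∀ t ∈ Icc (1 / 2 : ℝ) 1, φ t = q * φ (2 * t - 1) + c)
  (hp : |p| ≤ r) (hq : |q| ≤ r)
  (hM : ∀ s ∈ Icc (0 : ℝ) 1, ∀ t ∈ Icc (0 : ℝ) 1, |φ s - φ t| ≤ M)
include hL hR hp hq hM

/-- The `k`-th dyadic interval of level `n` is `{s | 2ⁿ s ∈ [k, k+1]}`. -/
lemma abs_sub_le_of_mem_dyadic (n : ℕ) :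
    ∀ k : ℕ, k + 1 ≤ 2 ^ n → ∀ s t : ℝ, 2 ^ n * s ∈ Icc (k : ℝ) (k + 1) →
      2 ^ n * t ∈ Icc (k : ℝ) (k + 1) → |φ s - φ t| ≤ M * r ^ n := by
  have hr : 0 ≤ r := (abs_nonneg p).trans hp
  induction n with
  | zero =>
    intro k hk s t hs ht
    obtain rfl : k = 0 := by omega
    simp only [pow_zero, one_mul, Nat.cast_zero, zero_add, mul_one] at hs ht ⊢
    exact hM s hs t ht
  | succ n ih =>
    intro k hk s t hs ht
    have h2n : (0 : ℝ) < 2 ^ n := by positivity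
    simp only [pow_succ, mem_Icc] at hs ht
    rcases le_or_gt (k + 1) (2 ^ n) with hkn | hkn
    · have hkn' : (k : ℝ) + 1 ≤ 2 ^ n := by exact_mod_cast hkn
      have hhalf : ∀ u : ℝ, k ≤ 2 ^ n * 2 * u ∧ 2 ^ n * 2 * u ≤ k + 1 → u ∈ Icc (0 : ℝ) (1 / 2) :=
        fun u hu => ⟨by nlinarith [k.cast_nonneg (α := ℝ)], by nlinarith⟩
      have hdiff : φ s - φ t = p * (φ (2 * s) - φ (2 * t)) := by
        rw [hL s (hhalf s hs), hL t (hhalf t ht)]; ring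
      have hrec := ih k hkn (2 * s) (2 * t) (by constructor <;> linarith)
        (by constructor <;> linarith)
      calc |φ s - φ t| = |p| * |φ (2 * s) - φ (2 * t)| := by rw [hdiff, abs_mul]
        _ ≤ r * (M * r ^ n) := mul_le_mul hp hrec (abs_nonneg _) hr
        _ = M * r ^ (n + 1) := by ring
    · obtain ⟨j, rfl⟩ : ∃ j, k = 2 ^ n + j := ⟨k - 2 ^ n, by omega⟩
      have hj : j + 1 ≤ 2 ^ n := by rw [pow_succ] at hk; omega
      have hj' : (j : ℝ) + 1 ≤ 2 ^ n := by exact_mod_cast hj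
      push_cast at hs ht
      have hhalf : ∀ u : ℝ, 2 ^ n + j ≤ 2 ^ n * 2 * u ∧ 2 ^ n * 2 * u ≤ 2 ^ n + j + 1 →
          u ∈ Icc (1 / 2 : ℝ) 1 :=
        fun u hu => ⟨by nlinarith [j.cast_nonneg (α := ℝ)], by nlinarith⟩
      have hdiff : φ s - φ t = q * (φ (2 * s - 1) - φ (2 * t - 1)) := by
        rw [hR s (hhalf s hs), hR t (hhalf t ht)]; ring
      have hrec := ih j hj (2 * s - 1) (2 * t - 1) (by constructor <;> linarith)
        (by constructor <;> linarith)
      calc |φ s - φ t| = |q| * |φ (2 * s - 1) - φ (2 * t - 1)| := by rw [hdiff, abs_mul]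
        _ ≤ r * (M * r ^ n) := mul_le_mul hq hrec (abs_nonneg _) hr
        _ = M * r ^ (n + 1) := by ring

end SelfAffine

lemma abs_sub_le_of_two_pow_mul_sub_le_one {f : ℝ → ℝ} {ε : ℝ} {n : ℕ}
    (hf : ∀ k : ℕ, k + 1 ≤ 2 ^ n → ∀ s t : ℝ, 2 ^ n * s ∈ Icc (k : ℝ) (k + 1) →
      2 ^ n * t ∈ Icc (k : ℝ) (k + 1) → |f s - f t| ≤ ε)
    {s t : ℝ} (hs : s ∈ Icc (0 : ℝ) 1) (ht : t ∈ Icc (0 : ℝ) 1) (hst : s ≤ t)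
    (hd : 2 ^ n * (t - s) ≤ 1) : |f t - f s| ≤ 2 * ε := by
  have h2n : (0 : ℝ) < 2 ^ n := by positivity
  have hε : 0 ≤ ε := by
    simpa using hf 0 Nat.one_le_two_pow 0 0 (by simp) (by simp)
  set k := ⌊2 ^ n * s⌋₊
  have hk : (k : ℝ) ≤ 2 ^ n * s := Nat.floor_le (by nlinarith [hs.1])
  have hk' : 2 ^ n * s < k + 1 := Nat.lt_floor_add_one _
  have hsk : 2 ^ n * s ∈ Icc (k : ℝ) (k + 1) := ⟨hk, hk'.le⟩
  rcases le_or_gt (k + 1) (2 ^ n) with hkn | hkn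
  · rcases le_or_gt (2 ^ n * t) (k + 1) with htk | htk
    · have := hf k hkn t s ⟨by nlinarith, htk⟩ hsk
      linarith
    · have hkn' : k + 1 + 1 ≤ 2 ^ n := by
        have : (k : ℝ) + 1 < 2 ^ n := htk.trans_le (by nlinarith [ht.2])
        exact_mod_cast this
      set m : ℝ := (k + 1) / 2 ^ n
      have hm : 2 ^ n * m = k + 1 := mul_div_cancel₀ _ h2n.ne'
      have h₁ := hf (k + 1) hkn' t m (by push_cast; constructor <;> linarith)
        (by push_cast; constructor <;> linarith)
      have h₂ := hf k hkn m s (by rw [hm]; constructor <;> linarith) hsk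
      linarith [abs_sub_le (f t) (f m) (f s)]
  · obtain rfl : s = 1 := le_antisymm hs.2 (by
      have : (2 : ℝ) ^ n ≤ k := by exact_mod_cast Nat.le_of_lt_succ hkn
      nlinarith)
    obtain rfl : t = 1 := le_antisymm ht.2 hst
    simpa using hε

lemma abs_sub_le_mul_rpow_of_dyadic {f : ℝ → ℝ} {K ρ : ℝ} (hρ : 1 ≤ ρ)
    (hf : ∀ n : ℕ, ∀ s ∈ Icc (0 : ℝ) 1, ∀ t ∈ Icc (0 : ℝ) 1, s ≤ t →
      2 ^ n * (t - s) ≤ 1 → |f t - f s| ≤ K / ρ ^ n)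
    {x y : ℝ} (hx : x ∈ Icc (0 : ℝ) 1) (hy : y ∈ Icc (0 : ℝ) 1) (hxy : x ≤ y) :
    |f y - f x| ≤ K * ρ * (y - x) ^ Real.logb 2 ρ := by
  set l := Real.logb 2 ρ
  have hl : 0 ≤ l := Real.logb_nonneg one_lt_two hρ
  have hK : 0 ≤ K := by simpa using hf 0 0 (by simp) 0 (by simp) le_rfl (by simp)
  rcases hxy.eq_or_lt with rfl | hlt
  · simp only [sub_self, abs_zero]; positivity
  set d := y - x
  have hd : 0 < d := sub_pos.2 hlt
  obtain ⟨n, hn, hn'⟩ := exists_nat_pow_near (one_le_one_div hd (by linarith [hx.1, hy.2]))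
    one_lt_two
  rw [le_div_iff₀ hd] at hn
  rw [div_lt_iff₀ hd] at hn'
  -- `ρ = 2 ^ l`, so `ρ ^ m * d ^ l = (2 ^ m * d) ^ l`.
  have hscale : 1 ≤ ρ ^ (n + 1) * d ^ l := by
    rw [← Real.rpow_logb two_pos (by norm_num) (by linarith : 0 < ρ),
      Real.rpow_pow_comm two_pos.le, ← Real.mul_rpow (by positivity) hd.le]
    exact Real.one_le_rpow hn'.le hl
  have hρn : 0 < ρ ^ n := by positivity
  calc |f y - f x| ≤ K / ρ ^ n := hf n x hx y hy hxy hn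
    _ ≤ K * ρ * d ^ l := by
      rw [div_le_iff₀ hρn]
      calc K = K * 1 := (mul_one K).symm
        _ ≤ K * (ρ ^ (n + 1) * d ^ l) := mul_le_mul_of_nonneg_left hscale hK
        _ = K * ρ * d ^ l * ρ ^ n := by ring

lemma ContinuousOn.exists_abs_sub_le {f : ℝ → ℝ} {a b : ℝ} (hf : ContinuousOn f (Icc a b)) :
    ∃ M, ∀ s ∈ Icc a b, ∀ t ∈ Icc a b, |f s - f t| ≤ M := by
  obtain ⟨B, hB⟩ := isCompact_Icc.exists_bound_of_continuousOn hf
  simp only [Real.norm_eq_abs] at hB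
  exact ⟨2 * B, fun s hs t ht => by linarith [abs_sub (f s) (f t), hB s hs, hB t ht]⟩

/-- With `λ := log₂((α+β)/max(α,β)) ∈ (0,1]`, the interpolation function `φ` is
Hölder continuous with exponent `λ` on `[0,1]`. -/
theorem phi_holder (α β : ℝ) (hα : 0 < α) (hβ : 0 < β)
    (φ : ℝ → ℝ) (hφ : IsInterp α β φ) :
    0 < Real.logb 2 ((α + β) / max α β) ∧ Real.logb 2 ((α + β) / max α β) ≤ 1 ∧
    ∃ C : ℝ, ∀ x ∈ Set.Icc (0 : ℝ) 1, ∀ y ∈ Set.Icc (0 : ℝ) 1,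
      |φ y - φ x| ≤ C * |y - x| ^ Real.logb 2 ((α + β) / max α β) := by
  obtain ⟨hcont, -, -, hL, hR⟩ := hφ
  set ρ := (α + β) / max α β
  have hρ : 1 < ρ := one_lt_add_div_max hα hβ
  have hρ₂ : ρ ≤ 2 ^ (1 : ℝ) := by simpa using add_div_max_le_two hα
  refine ⟨Real.logb_pos one_lt_two hρ,
    (Real.logb_le_iff_le_rpow one_lt_two (by positivity)).2 hρ₂, ?_⟩
  obtain ⟨M, hM⟩ := hcont.exists_abs_sub_le
  have hab : 0 < α + β := by linarith
  have hcoef : ∀ a, 0 < a → a ≤ max α β → |a / (α + β)| ≤ ρ⁻¹ := fun a ha hle => by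
    rw [inv_div, abs_of_pos (by positivity)]; gcongr
  have hdyadic (n : ℕ) := abs_sub_le_of_mem_dyadic hL hR (hcoef β hβ (le_max_right α β))
    (hcoef α hα (le_max_left α β)) hM n
  refine ⟨2 * M * ρ, fun x hx y hy => ?_⟩
  wlog hxy : x ≤ y generalizing x y
  · rw [abs_sub_comm, abs_sub_comm y]; exact this y hy x hx (le_of_not_ge hxy)
  rw [abs_of_nonneg (sub_nonneg.2 hxy)]
  refine abs_sub_le_mul_rpow_of_dyadic hρ.le (fun n s hs t ht hst hd => ?_) hx hy hxy
  rw [mul_div_assoc, div_eq_mul_inv, ← inv_pow]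
  exact abs_sub_le_of_two_pow_mul_sub_le_one (hdyadic n) hs ht hst hd
end

section
/- Let α, β > 0 with α ≠ β, λ := log₂((α+β)/max(α,β)), and φ the interpolation function for (α,β). Then for every γ > λ, φ is not Hölder continuous with exponent γ on [0,1]; in particular, φ is not Lipschitz continuous. Specifically, for every j ≥ 1, max(φ(2^{−j}) − φ(0), φ(1) − φ(1 − 2^{−j})) = (2^{−j})^λ. -/
open Set

lemma half_pow_mem_Icc (j : ℕ) : (1 / 2 : ℝ) ^ j ∈ Icc (0 : ℝ) 1 :=
  ⟨by positivity, pow_le_one₀ (by norm_num) (by norm_num)⟩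

lemma half_pow_succ_le_half (j : ℕ) : (1 / 2 : ℝ) ^ (j + 1) ≤ 1 / 2 :=
  pow_le_of_le_one (by norm_num) (by norm_num) j.succ_ne_zero

lemma one_half_rpow_logb_two {x : ℝ} (hx : 0 < x) : (1 / 2 : ℝ) ^ Real.logb 2 x = x⁻¹ := by
  rw [one_div, Real.inv_rpow zero_le_two, Real.rpow_logb two_pos (by norm_num) hx]

lemma logb_two_add_div_max_lt_one {α β : ℝ} (hα : 0 < α) (hβ : 0 < β) (hne : α ≠ β) :
    Real.logb 2 ((α + β) / max α β) < 1 := by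
  have hmax : 0 < max α β := lt_max_of_lt_left hα
  have hlt : (α + β) / max α β < 2 := by
    rw [div_lt_iff₀ hmax, ← min_add_max α β]
    linarith [min_lt_max.2 hne]
  rwa [Real.logb_lt_iff_lt_rpow one_lt_two (by positivity), Real.rpow_one]

lemma exists_mul_half_pow_rpow_lt {l γ : ℝ} (hγ : l < γ) (C : ℝ) :
    ∃ j : ℕ, C * ((1 / 2 : ℝ) ^ j) ^ γ < ((1 / 2 : ℝ) ^ j) ^ l := by
  have hbase : 1 < (1 / 2 : ℝ) ^ (l - γ) :=
    Real.one_lt_rpow_of_pos_of_lt_one_of_neg (by norm_num) (by norm_num) (by linarith)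
  obtain ⟨j, hj⟩ := pow_unbounded_of_one_lt C hbase
  refine ⟨j, ?_⟩
  have hh : 0 < (1 / 2 : ℝ) ^ j := by positivity
  rw [Real.rpow_pow_comm (by norm_num), Real.rpow_sub hh] at hj
  exact (lt_div_iff₀ (Real.rpow_pos_of_pos hh γ)).1 hj

namespace IsInterp

variable {α β : ℝ} {φ : ℝ → ℝ}

lemma apply_half_pow (hφ : IsInterp α β φ) (j : ℕ) :
    φ ((1 / 2) ^ j) = (β / (α + β)) ^ j := by
  induction j with
  | zero => simpa using hφ.2.2.1
  | succ j ih =>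
    rw [hφ.2.2.2.1 _ ⟨by positivity, half_pow_succ_le_half j⟩,
      show 2 * (1 / 2 : ℝ) ^ (j + 1) = (1 / 2) ^ j by ring, ih, pow_succ, mul_comm]

lemma apply_one_sub_half_pow (hφ : IsInterp α β φ) (hαβ : α + β ≠ 0) (j : ℕ) :
    φ (1 - (1 / 2) ^ j) = 1 - (α / (α + β)) ^ j := by
  induction j with
  | zero => simpa using hφ.2.1
  | succ j ih =>
    have hmem : 1 - (1 / 2 : ℝ) ^ (j + 1) ∈ Icc (1 / 2 : ℝ) 1 :=
      ⟨by linarith [half_pow_succ_le_half j], by linarith [(half_pow_mem_Icc (j + 1)).1]⟩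
    have hsum : α / (α + β) + β / (α + β) = 1 := by rw [← add_div, div_self hαβ]
    rw [hφ.2.2.2.2 _ hmem, show 2 * (1 - (1 / 2 : ℝ) ^ (j + 1)) - 1 = 1 - (1 / 2) ^ j by ring,
      ih]
    linear_combination hsum

lemma max_endpoint_increments_eq (hφ : IsInterp α β φ) (hα : 0 < α) (hβ : 0 < β) (j : ℕ) :
    max (φ ((1 / 2) ^ j) - φ 0) (φ 1 - φ (1 - (1 / 2) ^ j))
      = (((1 : ℝ) / 2) ^ j) ^ Real.logb 2 ((α + β) / max α β) := by
  have hαβ : 0 < α + β := by linarith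
  have hmax : 0 < max α β := lt_max_of_lt_left hα
  rw [hφ.apply_half_pow, hφ.apply_one_sub_half_pow hαβ.ne', hφ.2.1, hφ.2.2.1,
    ← Real.rpow_pow_comm (by norm_num), one_half_rpow_logb_two (by positivity), inv_div,
    sub_zero, sub_sub_cancel, max_comm, ← max_div_div_right hαβ.le]
  exact ((pow_left_monotoneOn (n := j)).map_max (div_nonneg hα.le hαβ.le) (div_nonneg hβ.le hαβ.le)).symm

end IsInterp

/-- If `α ≠ β`, then `φ` is not Hölder continuous on `[0,1]` for any exponent
`γ > λ := log₂((α+β)/max(α,β))`; in particular `φ` is not Lipschitz.  Moreover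
`max(φ(2^{−j}) − φ(0), φ(1) − φ(1 − 2^{−j})) = (2^{−j})^λ` for every `j ≥ 1`. -/
theorem phi_not_holder (α β : ℝ) (hα : 0 < α) (hβ : 0 < β) (hne : α ≠ β)
    (φ : ℝ → ℝ) (hφ : IsInterp α β φ) :
    (∀ γ : ℝ, Real.logb 2 ((α + β) / max α β) < γ →
      ¬ ∃ C : ℝ, ∀ x ∈ Set.Icc (0 : ℝ) 1, ∀ y ∈ Set.Icc (0 : ℝ) 1,
        |φ y - φ x| ≤ C * |y - x| ^ γ) ∧
    (¬ ∃ C : ℝ, ∀ x ∈ Set.Icc (0 : ℝ) 1, ∀ y ∈ Set.Icc (0 : ℝ) 1,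
        |φ y - φ x| ≤ C * |y - x|) ∧
    (∀ j : ℕ, 1 ≤ j →
      max (φ ((1 / 2) ^ j) - φ 0) (φ 1 - φ (1 - (1 / 2) ^ j))
        = (((1 : ℝ) / 2) ^ j) ^ Real.logb 2 ((α + β) / max α β)) := by
  have not_holder : ∀ γ : ℝ, Real.logb 2 ((α + β) / max α β) < γ →
      ¬ ∃ C : ℝ, ∀ x ∈ Icc (0 : ℝ) 1, ∀ y ∈ Icc (0 : ℝ) 1, |φ y - φ x| ≤ C * |y - x| ^ γ := by
    rintro γ hγ ⟨C, hC⟩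
    obtain ⟨j, hj⟩ := exists_mul_half_pow_rpow_lt hγ C
    have hh := half_pow_mem_Icc j
    have left := hC 0 (by norm_num) _ hh
    have right := hC _ (Icc.mem_iff_one_sub_mem.1 hh) 1 (by norm_num)
    rw [sub_zero, abs_of_nonneg hh.1] at left
    rw [sub_sub_cancel, abs_of_nonneg hh.1] at right
    refine hj.not_ge ?_
    rw [← hφ.max_endpoint_increments_eq hα hβ j]
    exact max_le ((le_abs_self _).trans left) ((le_abs_self _).trans right)
  refine ⟨not_holder, ?_, fun j _ => hφ.max_endpoint_increments_eq hα hβ j⟩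
  rintro ⟨C, hC⟩
  exact not_holder 1 (logb_two_add_div_max_lt_one hα hβ hne) ⟨C, by simpa using hC⟩
end

section
/- Suppose f : {1,2,3,…} → ℝ satisfies f(2n) = (α+β)f(n) + g(2n) and f(2n+1) = αf(n) + βf(n+1) + g(2n+1) for n ≥ 1, with α, β > 0, g(1) := 0. Extend f and g to real x ≥ 1 by f(n+t) := (1−φ(t))f(n) + φ(t)f(n+1) (similarly for g), where φ is the interpolation function for (α,β). Then f(x) = (α+β)·f(x/2) + g(x) for all real x ≥ 2. -/
open Set

def IsInterpExtension (φ : ℝ → ℝ) (f : ℕ → ℝ) (F : ℝ → ℝ) : Prop :=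
  ∀ n : ℕ, 1 ≤ n → ∀ t ∈ Icc (0 : ℝ) 1, F ((n : ℝ) + t) = (1 - φ t) * f n + φ t * f (n + 1)

lemma exists_nat_add_of_le {x : ℝ} {k : ℕ} (hx : (k : ℝ) ≤ x) :
    ∃ m : ℕ, k ≤ m ∧ ∃ t ∈ Ico (0 : ℝ) 1, x = m + t := by
  have hx0 : 0 ≤ x := le_trans k.cast_nonneg hx
  refine ⟨⌊x⌋₊, Nat.le_floor hx, x - ⌊x⌋₊, ⟨?_, ?_⟩, by ring⟩
  · linarith [Nat.floor_le hx0]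
  · linarith [Nat.lt_floor_add_one x]

section FunctionalEquation

variable {α β : ℝ} {φ : ℝ → ℝ} {f g : ℕ → ℝ} {F G : ℝ → ℝ}

lemma IsInterpExtension.apply_two_mul_add (hab : α + β ≠ 0)
    (hφ : ∀ t ∈ Icc (0 : ℝ) (1 / 2), φ t = β / (α + β) * φ (2 * t))
    (hF : IsInterpExtension φ f F) (hG : IsInterpExtension φ g G)
    (heven : ∀ n : ℕ, 1 ≤ n → f (2 * n) = (α + β) * f n + g (2 * n))
    (hodd : ∀ n : ℕ, 1 ≤ n → f (2 * n + 1) = α * f n + β * f (n + 1) + g (2 * n + 1))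
    {n : ℕ} (hn : 1 ≤ n) {t : ℝ} (ht : t ∈ Icc (0 : ℝ) 1) :
    F (2 * n + t) = (α + β) * F (n + t / 2) + G (2 * n + t) := by
  have ⟨ht0, ht1⟩ := ht
  have hφt : φ (t / 2) = β / (α + β) * φ t := by
    simpa [mul_div_cancel₀] using hφ (t / 2) ⟨by linarith, by linarith⟩
  have hcast : (2 * n : ℝ) = ((2 * n : ℕ) : ℝ) := by push_cast; ring
  rw [hcast, hF _ (by omega) t ht, hG _ (by omega) t ht,
    hF n hn _ ⟨by linarith, by linarith⟩, hφt, heven n hn, hodd n hn]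
  field_simp
  ring

lemma IsInterpExtension.apply_two_mul_add_one_add (hab : α + β ≠ 0)
    (hφ : ∀ t ∈ Icc (1 / 2 : ℝ) 1, φ t = α / (α + β) * φ (2 * t - 1) + β / (α + β))
    (hF : IsInterpExtension φ f F) (hG : IsInterpExtension φ g G)
    (heven : ∀ n : ℕ, 1 ≤ n → f (2 * n) = (α + β) * f n + g (2 * n))
    (hodd : ∀ n : ℕ, 1 ≤ n → f (2 * n + 1) = α * f n + β * f (n + 1) + g (2 * n + 1))
    {n : ℕ} (hn : 1 ≤ n) {t : ℝ} (ht : t ∈ Icc (0 : ℝ) 1) :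
    F (2 * n + 1 + t) = (α + β) * F (n + (t + 1) / 2) + G (2 * n + 1 + t) := by
  have ⟨ht0, ht1⟩ := ht
  have hφt : φ ((t + 1) / 2) = α / (α + β) * φ t + β / (α + β) := by
    have := hφ ((t + 1) / 2) ⟨by linarith, by linarith⟩
    rwa [show 2 * ((t + 1) / 2) - 1 = t by ring] at this
  have hcast : (2 * n + 1 : ℝ) = ((2 * n + 1 : ℕ) : ℝ) := by push_cast; ring
  have hsucc : 2 * n + 1 + 1 = 2 * (n + 1) := by ring
  rw [hcast, hF _ (by omega) t ht, hG _ (by omega) t ht,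
    hF n hn _ ⟨by linarith, by linarith⟩, hφt, hsucc, hodd n hn, heven (n + 1) (by omega)]
  field_simp
  ring

end FunctionalEquation

theorem extension_functional_equation_general (α β : ℝ) (hα : 0 < α) (hβ : 0 < β)
    (φ : ℝ → ℝ) (hφ : IsInterp α β φ)
    (f g : ℕ → ℝ)
    (hrec : ∀ n : ℕ, 1 ≤ n →
      f (2 * n) = (α + β) * f n + g (2 * n) ∧
      f (2 * n + 1) = α * f n + β * f (n + 1) + g (2 * n + 1))
    (F G : ℝ → ℝ)
    (hF : ∀ n : ℕ, 1 ≤ n → ∀ t ∈ Set.Icc (0 : ℝ) 1,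
      F ((n : ℝ) + t) = (1 - φ t) * f n + φ t * f (n + 1))
    (hG : ∀ n : ℕ, 1 ≤ n → ∀ t ∈ Set.Icc (0 : ℝ) 1,
      G ((n : ℝ) + t) = (1 - φ t) * g n + φ t * g (n + 1)) :
    ∀ x : ℝ, 2 ≤ x → F x = (α + β) * F (x / 2) + G x := by
  intro x hx
  have hab : α + β ≠ 0 := by positivity
  have heven n hn := (hrec n hn).1
  have hodd n hn := (hrec n hn).2
  obtain ⟨m, hm, t, ht, rfl⟩ := exists_nat_add_of_le (k := 2) (by exact_mod_cast hx)
  obtain ⟨n, rfl | rfl⟩ := Nat.even_or_odd' m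
  · have h := IsInterpExtension.apply_two_mul_add hab hφ.2.2.2.1 hF hG heven hodd
      (n := n) (by omega) (Ico_subset_Icc_self ht)
    push_cast
    rwa [show (2 * n + t) / 2 = n + t / 2 by ring]
  · have h := IsInterpExtension.apply_two_mul_add_one_add hab hφ.2.2.2.2 hF hG heven hodd
      (n := n) (by omega) (Ico_subset_Icc_self ht)
    push_cast
    rwa [show (2 * n + 1 + t) / 2 = n + (t + 1) / 2 by ring]

/-- If the sequences `f, g` satisfy `f(2n) = (α+β)f(n) + g(2n)` and
`f(2n+1) = αf(n) + βf(n+1) + g(2n+1)` with `g(1) = 0`, and `F, G` are the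
continuous extensions via the interpolation function `φ`, then
`F(x) = (α+β)·F(x/2) + G(x)` for all real `x ≥ 2`. -/
theorem extension_functional_equation (α β : ℝ) (hα : 0 < α) (hβ : 0 < β)
    (φ : ℝ → ℝ) (hφ : IsInterp α β φ)
    (f g : ℕ → ℝ) (hg1 : g 1 = 0)
    (hrec : ∀ n : ℕ, 1 ≤ n →
      f (2 * n) = (α + β) * f n + g (2 * n) ∧
      f (2 * n + 1) = α * f n + β * f (n + 1) + g (2 * n + 1))
    (F G : ℝ → ℝ)
    (hF : ∀ n : ℕ, 1 ≤ n → ∀ t ∈ Set.Icc (0 : ℝ) 1,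
      F ((n : ℝ) + t) = (1 - φ t) * f n + φ t * f (n + 1))
    (hG : ∀ n : ℕ, 1 ≤ n → ∀ t ∈ Set.Icc (0 : ℝ) 1,
      G ((n : ℝ) + t) = (1 - φ t) * g n + φ t * g (n + 1)) :
    ∀ x : ℝ, 2 ≤ x → F x = (α + β) * F (x / 2) + G x :=
  extension_functional_equation_general α β hα hβ φ hφ f g hrec F G hF hG
end

section
/- Let α, β > 0, ρ := log₂(α+β), and let f be the continuous extension (via the interpolation function φ) of a sequence satisfying f(2n) = (α+β)f(n) + g(2n), f(2n+1) = αf(n) + βf(n+1) + g(2n+1), with g extended likewise and g(x) := 0 for x < 1. Then for all x ≥ 1, x^{−ρ} f(x) = Σ_{k≥0} (2^{−k}x)^{−ρ} g(2^{−k}x) + f(1)·P₀(log₂ x), where P₀(t) := (1 + (α+β−1)·φ(2^{{t}} − 1))·(α+β)^{−{t}} is a continuous 1-periodic function with P₀(0) = 1. -/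
open Set

section Scaling

variable {b : ℝ} {u v p : ℝ → ℝ}

lemma inv_pow_mul_lt_one {x : ℝ} (hb : 1 < b) {m k : ℕ} (hx : x < b ^ (m + 1))
    (hk : m + 1 ≤ k) : (b ^ k)⁻¹ * x < 1 := by
  have hbk : 0 < b ^ k := by positivity
  rw [inv_mul_lt_one₀ hbk]
  exact hx.trans_le (pow_le_pow_right₀ hb.le hk)

lemma eq_sum_add_of_scaling_eq (hb : 1 < b)
    (hstep : ∀ x, 1 ≤ x → u (b * x) = u x + v (b * x))
    (hbase : ∀ x, 1 ≤ x → x < b → u x = v x + p x)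
    (hp : ∀ x, 1 ≤ x → p (b * x) = p x) :
    ∀ (m : ℕ) (x : ℝ), b ^ m ≤ x → x < b ^ (m + 1) →
      u x = ∑ k ∈ Finset.range (m + 1), v ((b ^ k)⁻¹ * x) + p x := by
  have hb0 : 0 < b := one_pos.trans hb
  intro m
  induction m with
  | zero =>
    intro x hx1 hx2
    simp only [pow_zero, zero_add, pow_one] at hx1 hx2
    simp [hbase x hx1 hx2]
  | succ m ih =>
    intro x hx1 hx2
    obtain ⟨y, rfl⟩ : ∃ y, x = b * y := ⟨x / b, by field_simp⟩
    rw [pow_succ', mul_le_mul_iff_right₀ hb0] at hx1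
    rw [pow_succ' _ (m + 1), mul_lt_mul_iff_right₀ hb0] at hx2
    have hy : 1 ≤ y := (one_le_pow₀ hb.le).trans hx1
    rw [hstep y hy, ih y hx1 hx2, hp y hy, Finset.sum_range_succ' _ (m + 1)]
    have hshift : ∀ k : ℕ, (b ^ (k + 1))⁻¹ * (b * y) = (b ^ k)⁻¹ * y := fun k => by
      field_simp
      ring
    simp only [hshift, pow_zero, inv_one, one_mul]
    ring

theorem eq_tsum_add_of_scaling_eq (hb : 1 < b)
    (hstep : ∀ x, 1 ≤ x → u (b * x) = u x + v (b * x))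
    (hbase : ∀ x, 1 ≤ x → x < b → u x = v x + p x)
    (hp : ∀ x, 1 ≤ x → p (b * x) = p x)
    (hv : ∀ x, x < 1 → v x = 0) {x : ℝ} (hx : 1 ≤ x) :
    u x = ∑' k : ℕ, v (b ^ (-(k : ℝ)) * x) + p x := by
  obtain ⟨m, hm1, hm2⟩ := exists_nat_pow_near hx hb
  simp only [Real.rpow_neg (one_pos.trans hb).le, Real.rpow_natCast]
  rw [tsum_eq_sum (s := Finset.range (m + 1)) fun k hk =>
    hv _ (inv_pow_mul_lt_one hb hm2 (by simpa using hk))]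
  exact eq_sum_add_of_scaling_eq hb hstep hbase hp m x hm1 hm2

end Scaling


lemma Real.rpow_neg_logb_comm {b c x : ℝ} (hc : 0 < c) (hx : 0 < x) :
    c ^ (-Real.logb b x) = x ^ (-Real.logb b c) := by
  rw [Real.rpow_def_of_pos hc, Real.rpow_def_of_pos hx, Real.logb, Real.logb]
  ring_nf

noncomputable def unitProfile (α β : ℝ) (φ : ℝ → ℝ) (s : ℝ) : ℝ :=
  (1 + (α + β - 1) * φ ((2 : ℝ) ^ s - 1)) * (α + β) ^ (-s)

section Profile

variable {α β : ℝ} {φ : ℝ → ℝ}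

lemma unitProfile_zero (hφ0 : φ 0 = 0) : unitProfile α β φ 0 = 1 := by
  simp [unitProfile, hφ0]

lemma unitProfile_one (hφ1 : φ 1 = 1) (hαβ : α + β ≠ 0) : unitProfile α β φ 1 = 1 := by
  norm_num [unitProfile, hφ1, Real.rpow_neg_one, hαβ]

lemma mapsTo_two_rpow_sub_one : MapsTo (fun s : ℝ => (2 : ℝ) ^ s - 1) (Icc 0 1) (Icc 0 1) := by
  intro s ⟨hs0, hs1⟩
  have h0 := Real.one_le_rpow (by norm_num : (1 : ℝ) ≤ 2) hs0
  have h1 := Real.rpow_le_rpow_of_exponent_le (by norm_num : (1 : ℝ) ≤ 2) hs1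
  rw [Real.rpow_one] at h1
  exact ⟨by linarith, by linarith⟩

lemma continuousOn_unitProfile (hφc : ContinuousOn φ (Icc 0 1)) (hαβ : α + β ≠ 0) :
    ContinuousOn (unitProfile α β φ) (Icc 0 1) := by
  have h2 : Continuous fun s : ℝ => (2 : ℝ) ^ s - 1 :=
    (continuous_const.rpow continuous_id fun _ => Or.inl two_ne_zero).sub continuous_const
  have hpow : Continuous fun s : ℝ => (α + β) ^ (-s) :=
    continuous_const.rpow continuous_neg fun _ => Or.inl hαβ
  exact (continuousOn_const.add (continuousOn_const.mul
    (hφc.comp h2.continuousOn mapsTo_two_rpow_sub_one))).mul hpow.continuousOn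

lemma unitProfile_logb (hαβ : 0 < α + β) {y : ℝ} (hy : 0 < y) :
    unitProfile α β φ (Real.logb 2 y)
      = (1 + (α + β - 1) * φ (y - 1)) * y ^ (-Real.logb 2 (α + β)) := by
  rw [unitProfile, Real.rpow_logb (by norm_num) (by norm_num) hy, Real.rpow_neg_logb_comm hαβ hy]

end Profile

def IsInterpolant (φ : ℝ → ℝ) (f : ℕ → ℝ) (F : ℝ → ℝ) : Prop :=
  ∀ n : ℕ, 1 ≤ n → ∀ t ∈ Icc (0 : ℝ) 1, F (n + t) = (1 - φ t) * f n + φ t * f (n + 1)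

def SatisfiesRecurrence (α β : ℝ) (f g : ℕ → ℝ) : Prop :=
  ∀ n : ℕ, 1 ≤ n →
    f (2 * n) = (α + β) * f n + g (2 * n) ∧
    f (2 * n + 1) = α * f n + β * f (n + 1) + g (2 * n + 1)

section Interpolation

variable {α β : ℝ} {φ : ℝ → ℝ} {f g : ℕ → ℝ} {F G : ℝ → ℝ}

lemma IsInterpolant.apply_two_mul_of_le_half (hφ : IsInterp α β φ) (hαβ : α + β ≠ 0)
    (hrec : SatisfiesRecurrence α β f g) (hF : IsInterpolant φ f F) (hG : IsInterpolant φ g G)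
    {n : ℕ} (hn : 1 ≤ n) {t : ℝ} (ht : t ∈ Icc (0 : ℝ) (1 / 2)) :
    F (2 * (n + t)) = (α + β) * F (n + t) + G (2 * (n + t)) := by
  have harg : 2 * ((n : ℝ) + t) = ((2 * n : ℕ) : ℝ) + 2 * t := by push_cast; ring
  have h2t : 2 * t ∈ Icc (0 : ℝ) 1 := ⟨by linarith [ht.1], by linarith [ht.2]⟩
  obtain ⟨hr₀, hr₁⟩ := hrec n hn
  rw [harg, hF _ (by omega) _ h2t, hG _ (by omega) _ h2t,
    hF n hn t (Icc_subset_Icc_right (by norm_num) ht), hr₀, hr₁, hφ.2.2.2.1 t ht]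
  field_simp
  ring

lemma IsInterpolant.apply_two_mul_of_half_le (hφ : IsInterp α β φ) (hαβ : α + β ≠ 0)
    (hrec : SatisfiesRecurrence α β f g) (hF : IsInterpolant φ f F) (hG : IsInterpolant φ g G)
    {n : ℕ} (hn : 1 ≤ n) {t : ℝ} (ht : t ∈ Icc (1 / 2 : ℝ) 1) :
    F (2 * (n + t)) = (α + β) * F (n + t) + G (2 * (n + t)) := by
  have harg : 2 * ((n : ℝ) + t) = ((2 * n + 1 : ℕ) : ℝ) + (2 * t - 1) := by push_cast; ring
  have h2t : 2 * t - 1 ∈ Icc (0 : ℝ) 1 := ⟨by linarith [ht.1], by linarith [ht.2]⟩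
  have hidx : 2 * n + 1 + 1 = 2 * (n + 1) := by ring
  rw [harg, hF _ (by omega) _ h2t, hG _ (by omega) _ h2t,
    hF n hn t (Icc_subset_Icc_left (by norm_num) ht), hidx, (hrec n hn).2,
    (hrec (n + 1) (by omega)).1, hφ.2.2.2.2 t ht]
  field_simp
  ring

lemma IsInterpolant.apply_two_mul (hφ : IsInterp α β φ) (hαβ : α + β ≠ 0)
    (hrec : SatisfiesRecurrence α β f g) (hF : IsInterpolant φ f F) (hG : IsInterpolant φ g G)
    {x : ℝ} (hx : 1 ≤ x) : F (2 * x) = (α + β) * F x + G (2 * x) := by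
  obtain ⟨n, hn, t, ht0, ht1, rfl⟩ : ∃ n : ℕ, 1 ≤ n ∧ ∃ t : ℝ, 0 ≤ t ∧ t < 1 ∧ x = n + t :=
    ⟨⌊x⌋₊, Nat.le_floor (by exact_mod_cast hx), x - ⌊x⌋₊,
      sub_nonneg.2 (Nat.floor_le (by linarith)), by linarith [Nat.lt_floor_add_one x], by ring⟩
  rcases le_total t (1 / 2) with h | h
  · exact hF.apply_two_mul_of_le_half hφ hαβ hrec hG hn ⟨ht0, h⟩
  · exact hF.apply_two_mul_of_half_le hφ hαβ hrec hG hn ⟨h, ht1.le⟩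

lemma IsInterpolant.apply_one_add (hg1 : g 1 = 0) (hrec : SatisfiesRecurrence α β f g)
    (hF : IsInterpolant φ f F) (hG : IsInterpolant φ g G) {t : ℝ} (ht : t ∈ Icc (0 : ℝ) 1) :
    F (1 + t) = G (1 + t) + f 1 * (1 + (α + β - 1) * φ t) := by
  have hF1 := hF 1 le_rfl t ht
  have hG1 := hG 1 le_rfl t ht
  have hf2 := (hrec 1 le_rfl).1
  norm_num at hF1 hG1 hf2
  rw [hF1, hG1, hf2, hg1]
  ring

end Interpolation

/-- With `ρ := log₂(α+β)`, the continuous extension `F` of the recurrence satisfies,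
for all `x ≥ 1`,
`x^{−ρ} F(x) = Σ_{k≥0} (2^{−k}x)^{−ρ} G(2^{−k}x) + f(1)·P₀(log₂ x)`, where
`P₀(t) = (1 + (α+β−1)φ(2^{{t}}−1))(α+β)^{−{t}}` is continuous, 1-periodic, `P₀(0)=1`. -/
theorem key_identity (α β : ℝ) (hα : 0 < α) (hβ : 0 < β)
    (φ : ℝ → ℝ) (hφ : IsInterp α β φ)
    (f g : ℕ → ℝ) (hg1 : g 1 = 0)
    (hrec : ∀ n : ℕ, 1 ≤ n →
      f (2 * n) = (α + β) * f n + g (2 * n) ∧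
      f (2 * n + 1) = α * f n + β * f (n + 1) + g (2 * n + 1))
    (F G : ℝ → ℝ)
    (hF : ∀ n : ℕ, 1 ≤ n → ∀ t ∈ Set.Icc (0 : ℝ) 1,
      F ((n : ℝ) + t) = (1 - φ t) * f n + φ t * f (n + 1))
    (hG : ∀ n : ℕ, 1 ≤ n → ∀ t ∈ Set.Icc (0 : ℝ) 1,
      G ((n : ℝ) + t) = (1 - φ t) * g n + φ t * g (n + 1))
    (hG0 : ∀ x : ℝ, x < 1 → G x = 0)
    (P₀ : ℝ → ℝ)
    (hP₀ : ∀ t : ℝ, P₀ t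
      = (1 + (α + β - 1) * φ ((2 : ℝ) ^ Int.fract t - 1))
          * (α + β) ^ (-(Int.fract t))) :
    Continuous P₀ ∧ (∀ t : ℝ, P₀ (t + 1) = P₀ t) ∧ P₀ 0 = 1 ∧
    ∀ x : ℝ, 1 ≤ x →
      x ^ (-(Real.logb 2 (α + β))) * F x
        = (∑' k : ℕ, ((2 : ℝ) ^ (-(k : ℝ)) * x) ^ (-(Real.logb 2 (α + β)))
              * G ((2 : ℝ) ^ (-(k : ℝ)) * x))
          + f 1 * P₀ (Real.logb 2 x) := by
  have hαβ : 0 < α + β := add_pos hα hβ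
  have hPQ : P₀ = unitProfile α β φ ∘ Int.fract := funext hP₀
  have hper : ∀ t, P₀ (t + 1) = P₀ t := by simp [hPQ, Int.fract_add_one]
  have hP0 : P₀ 0 = 1 := by simp [hPQ, unitProfile_zero hφ.2.1]
  refine ⟨?_, hper, hP0, fun x hx => ?_⟩
  · rw [hPQ]
    exact (continuousOn_unitProfile hφ.1 hαβ.ne').comp_fract''
      ((unitProfile_zero hφ.2.1).trans (unitProfile_one hφ.2.2.1 hαβ.ne').symm)
  set ρ := Real.logb 2 (α + β)
  have hdouble : ∀ y : ℝ, 0 < y → (2 * y) ^ (-ρ) = (α + β)⁻¹ * y ^ (-ρ) := fun y hy => by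
    rw [Real.mul_rpow zero_le_two hy.le, Real.rpow_neg zero_le_two,
      Real.rpow_logb (by norm_num) (by norm_num) hαβ]
  refine eq_tsum_add_of_scaling_eq (u := fun x => x ^ (-ρ) * F x) (v := fun x => x ^ (-ρ) * G x)
    (p := fun x => f 1 * P₀ (Real.logb 2 x)) one_lt_two (fun y hy => ?_) (fun y hy1 hy2 => ?_)
    (fun y hy => ?_) (fun y hy => by simp [hG0 y hy]) hx
  · rw [IsInterpolant.apply_two_mul hφ hαβ.ne' hrec hF hG hy, hdouble y (by linarith)]
    field_simp
  · obtain ⟨t, ht, rfl⟩ : ∃ t ∈ Set.Icc (0 : ℝ) 1, y = 1 + t :=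
      ⟨y - 1, ⟨by linarith, by linarith⟩, by ring⟩
    have hlog : Int.fract (Real.logb 2 (1 + t)) = Real.logb 2 (1 + t) :=
      Int.fract_eq_self.2 ⟨Real.logb_nonneg one_lt_two hy1,
        by rwa [Real.logb_lt_iff_lt_rpow one_lt_two (by linarith), Real.rpow_one]⟩
    rw [IsInterpolant.apply_one_add hg1 hrec hF hG ht, hPQ, Function.comp_apply, hlog,
      unitProfile_logb hαβ (by linarith), add_sub_cancel_left]
    ring
  · rw [Real.logb_mul two_ne_zero (by linarith), Real.logb_self_eq_one one_lt_two, add_comm, hper]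
end

section
/- Let α, β > 0 with α + β > 1, and let S_{α,β} be defined by S_{α,β}(1) = 1 and S_{α,β}(n) = α·S_{α,β}(⌊n/2⌋) + β·S_{α,β}(⌈n/2⌉) for n ≥ 2. Then S_{α,β}(n) = (1 + (α+β−1)·φ(2^{{log₂ n}} − 1))·(α+β)^{⌊log₂ n⌋} for all n ≥ 1, where φ is the interpolation function for (α,β) and {·}, ⌊·⌋ denote fractional and integer parts. -/
/-!
Write `n = 2 ^ k + r` with `0 ≤ r ≤ 2 ^ k`, so that `2 ^ {log₂ n} - 1 = r / 2 ^ k` and `⌊log₂ n⌋ = k`. The recursion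
for `S` strips the lowest binary digit of `n`, while the functional equations of `φ` strip the
highest binary digit of its argument. The two are reconciled by the midpoint identity
`(α + β) φ((2s+1)/2^(j+1)) = α φ(s/2^j) + β φ((s+1)/2^j)`, proved by induction on `j` from the
functional equations. With it, `S(2 ^ k + r) = (1 + (α + β - 1) φ(r / 2 ^ k)) (α + β) ^ k`
follows by induction on `k`, splitting on the parity of `r`.
-/

namespace IsInterp

variable {α β : ℝ} {φ : ℝ → ℝ}

lemma apply_natCast_div_two_pow_succ (hφ : IsInterp α β φ) {j s : ℕ} (hs : s ≤ 2 ^ j) :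
    φ (s / 2 ^ (j + 1)) = β / (α + β) * φ (s / 2 ^ j) := by
  have hs' : (s : ℝ) ≤ 2 ^ j := by exact_mod_cast hs
  have hmem : (s : ℝ) / 2 ^ (j + 1) ∈ Set.Icc (0 : ℝ) (1 / 2) := by
    refine ⟨by positivity, ?_⟩
    rw [div_le_iff₀ (by positivity), pow_succ]
    linarith
  rw [hφ.2.2.2.1 _ hmem]
  congr 2
  field_simp
  ring

lemma apply_two_pow_add_div_two_pow_succ (hφ : IsInterp α β φ) {j s : ℕ} (hs : s ≤ 2 ^ j) :
    φ (((2 ^ j + s : ℕ) : ℝ) / 2 ^ (j + 1))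
      = α / (α + β) * φ (s / 2 ^ j) + β / (α + β) := by
  have hs' : (s : ℝ) ≤ 2 ^ j := by exact_mod_cast hs
  have hmem : ((2 ^ j + s : ℕ) : ℝ) / 2 ^ (j + 1) ∈ Set.Icc (1 / 2 : ℝ) 1 := by
    push_cast
    constructor
    · rw [le_div_iff₀ (by positivity), pow_succ]
      linarith [s.cast_nonneg (α := ℝ)]
    · rw [div_le_one (by positivity), pow_succ]
      linarith
  rw [hφ.2.2.2.2 _ hmem]
  congr 3
  push_cast
  field_simp
  ring

lemma add_mul_apply_odd_div_two_pow_succ (hφ : IsInterp α β φ) (hαβ : α + β ≠ 0) :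
    ∀ j s : ℕ, s < 2 ^ j →
      (α + β) * φ (((2 * s + 1 : ℕ) : ℝ) / 2 ^ (j + 1))
        = α * φ (s / 2 ^ j) + β * φ (((s + 1 : ℕ) : ℝ) / 2 ^ j) := by
  intro j
  induction j with
  | zero =>
    intro s hs
    obtain rfl : s = 0 := by simpa using hs
    have hhalf : φ (1 / 2) = β / (α + β) := by
      simpa [hφ.2.2.1] using hφ.apply_natCast_div_two_pow_succ (j := 0) (s := 1) le_rfl
    norm_num [hhalf, hφ.2.1, hφ.2.2.1]
    field_simp
  | succ j ih =>
    intro s hs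
    rcases lt_or_ge s (2 ^ j) with hlow | hhigh
    · rw [hφ.apply_natCast_div_two_pow_succ (j := j + 1) (s := 2 * s + 1) (by rw [pow_succ]; omega),
        hφ.apply_natCast_div_two_pow_succ hlow.le, hφ.apply_natCast_div_two_pow_succ hlow]
      linear_combination β / (α + β) * ih s hlow
    · obtain ⟨s, rfl⟩ := Nat.exists_eq_add_of_le hhigh
      have hs : s < 2 ^ j := by rw [pow_succ] at hs; omega
      rw [show 2 * (2 ^ j + s) + 1 = 2 ^ (j + 1) + (2 * s + 1) by ring,
        show 2 ^ j + s + 1 = 2 ^ j + (s + 1) by ring,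
        hφ.apply_two_pow_add_div_two_pow_succ (by rw [pow_succ]; omega),
        hφ.apply_two_pow_add_div_two_pow_succ hs, hφ.apply_two_pow_add_div_two_pow_succ hs.le]
      linear_combination α / (α + β) * ih s hs

lemma eq_of_halving_recurrence (hφ : IsInterp α β φ) (hαβ : α + β ≠ 0) {S : ℕ → ℝ}
    (hS1 : S 1 = 1) (hSrec : ∀ n : ℕ, 2 ≤ n → S n = α * S (n / 2) + β * S ((n + 1) / 2)) :
    ∀ k r : ℕ, r ≤ 2 ^ k → S (2 ^ k + r) = (1 + (α + β - 1) * φ (r / 2 ^ k)) * (α + β) ^ k := by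
  intro k
  induction k with
  | zero =>
    intro r hr
    obtain rfl | rfl : r = 0 ∨ r = 1 := by rw [pow_zero] at hr; omega
    · simp [hS1, hφ.2.1]
    · simp [hSrec 2 le_rfl, hS1, hφ.2.2.1]
  | succ k ih =>
    intro r hr
    have hk : 1 ≤ 2 ^ k := Nat.one_le_two_pow
    rw [pow_succ] at hr
    obtain ⟨s, rfl | rfl⟩ := Nat.even_or_odd' r
    · have hfloor : (2 ^ (k + 1) + 2 * s) / 2 = 2 ^ k + s := by rw [pow_succ]; omega
      have hceil : (2 ^ (k + 1) + 2 * s + 1) / 2 = 2 ^ k + s := by rw [pow_succ]; omega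
      have hdiv : ((2 * s : ℕ) : ℝ) / 2 ^ (k + 1) = s / 2 ^ k := by
        push_cast
        field_simp
        ring
      rw [hSrec _ (by rw [pow_succ]; omega), hfloor, hceil, ih s (by omega), hdiv]
      ring
    · have hfloor : (2 ^ (k + 1) + (2 * s + 1)) / 2 = 2 ^ k + s := by rw [pow_succ]; omega
      have hceil : (2 ^ (k + 1) + (2 * s + 1) + 1) / 2 = 2 ^ k + (s + 1) := by
        rw [pow_succ]; omega
      rw [hSrec _ (by rw [pow_succ]; omega), hfloor, hceil, ih s (by omega), ih (s + 1) (by omega)]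
      linear_combination (-(α + β - 1) * (α + β) ^ k) *
        hφ.add_mul_apply_odd_div_two_pow_succ hαβ k s (by omega)

end IsInterp

lemma floor_logb_two_natCast (n : ℕ) : ⌊Real.logb 2 n⌋ = Nat.log 2 n := by
  simpa using Real.floor_logb_natCast (b := 2) n.cast_nonneg

lemma two_rpow_fract_logb_two_natCast_sub_one {n : ℕ} (hn : n ≠ 0) :
    (2 : ℝ) ^ Int.fract (Real.logb 2 n) - 1
      = ((n - 2 ^ Nat.log 2 n : ℕ) : ℝ) / 2 ^ Nat.log 2 n := by
  have hn' : (0 : ℝ) < n := by positivity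
  rw [Int.fract, floor_logb_two_natCast, Real.rpow_sub two_pos, Real.rpow_logb two_pos
    one_lt_two.ne' hn', Int.cast_natCast, Real.rpow_natCast,
    Nat.cast_sub (Nat.pow_log_le_self 2 hn)]
  push_cast
  field_simp

theorem S_explicit_general (α β : ℝ) (hab : 1 < α + β)
    (φ : ℝ → ℝ) (hφ : IsInterp α β φ)
    (S : ℕ → ℝ) (hS1 : S 1 = 1)
    (hSrec : ∀ n : ℕ, 2 ≤ n → S n = α * S (n / 2) + β * S ((n + 1) / 2)) :
    ∀ n : ℕ, 1 ≤ n →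
      S n = (1 + (α + β - 1) * φ ((2 : ℝ) ^ Int.fract (Real.logb 2 (n : ℝ)) - 1))
              * (α + β) ^ (⌊Real.logb 2 (n : ℝ)⌋) := by
  intro n hn
  have hlow : 2 ^ Nat.log 2 n ≤ n := Nat.pow_log_le_self 2 (by omega)
  have hhigh : n < 2 ^ (Nat.log 2 n + 1) := Nat.lt_pow_succ_log_self one_lt_two n
  rw [two_rpow_fract_logb_two_natCast_sub_one (by omega), floor_logb_two_natCast, zpow_natCast,
    ← hφ.eq_of_halving_recurrence (by linarith) hS1 hSrec _ _ (by rw [pow_succ] at hhigh; omega),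
    Nat.add_sub_cancel' hlow]

/-- Explicit formula for `S_{α,β}(n)`: if `S(1)=1` and
`S(n) = α S(⌊n/2⌋) + β S(⌈n/2⌉)` for `n ≥ 2`, then
`S(n) = (1 + (α+β−1)φ(2^{{log₂ n}} − 1))·(α+β)^{⌊log₂ n⌋}` for all `n ≥ 1`. -/
theorem S_explicit (α β : ℝ) (hα : 0 < α) (hβ : 0 < β) (hab : 1 < α + β)
    (φ : ℝ → ℝ) (hφ : IsInterp α β φ)
    (S : ℕ → ℝ) (hS1 : S 1 = 1)
    (hSrec : ∀ n : ℕ, 2 ≤ n → S n = α * S (n / 2) + β * S ((n + 1) / 2)) :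
    ∀ n : ℕ, 1 ≤ n →
      S n = (1 + (α + β - 1) * φ ((2 : ℝ) ^ Int.fract (Real.logb 2 (n : ℝ)) - 1))
              * (α + β) ^ (⌊Real.logb 2 (n : ℝ)⌋) :=
  S_explicit_general α β hab φ hφ S hS1 hSrec
end

section
/- Let α, β > 0 and ν(k) the number of 1s in the binary expansion of k. Then the partial sum f(n) := Σ_{0 ≤ k < n} α^{ν(k)} satisfies f(1) = 1 and f(n) = α f(⌊n/2⌋) + f(⌈n/2⌉) for all n ≥ 2; consequently f(n) = S_{α,1}(n), the solution of Λ_{α,1}[f] = 0 with f(1) = 1. -/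
/-! Splitting the sum over `[0, n)` by the parity of `k` and using `ν(2j) = ν(j)`,
`ν(2j+1) = ν(j) + 1` gives the recurrence. Uniqueness on `n ≥ 1` is strong induction, since
`⌊n/2⌋` and `⌈n/2⌉` are smaller than `n` once `n ≥ 2`. -/

/-- `ν(k)`, the number of 1s in the binary expansion of `k`. -/
def nu (k : ℕ) : ℕ := (Nat.digits 2 k).sum

open Finset

theorem nu_two_mul (k : ℕ) : nu (2 * k) = nu k := by
  rcases Nat.eq_zero_or_pos k with rfl | hk
  · rfl
  simpa [nu] using congrArg List.sum (Nat.digits_add 2 one_lt_two 0 k two_pos (Or.inr hk.ne'))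

theorem nu_two_mul_add_one (k : ℕ) : nu (2 * k + 1) = nu k + 1 := by
  rw [nu, add_comm, Nat.digits_add 2 one_lt_two 1 k one_lt_two (Or.inl one_ne_zero),
    List.sum_cons, nu, add_comm]

theorem sum_range_eq_sum_even_add_sum_odd {M : Type*} [AddCommMonoid M] (g : ℕ → M) :
    ∀ n : ℕ, ∑ k ∈ range n, g k =
      ∑ j ∈ range ((n + 1) / 2), g (2 * j) + ∑ j ∈ range (n / 2), g (2 * j + 1)
  | 0 => by simp
  | 1 => by simp
  | n + 2 => by
    rw [show (n + 2 + 1) / 2 = (n + 1) / 2 + 1 by omega, show (n + 2) / 2 = n / 2 + 1 by omega,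
      sum_range_succ, sum_range_succ, sum_range_succ _ ((n + 1) / 2), sum_range_succ _ (n / 2),
      sum_range_eq_sum_even_add_sum_odd g n]
    obtain ⟨m, rfl | rfl⟩ := Nat.even_or_odd' n
    · rw [show (2 * m + 1) / 2 = m by omega, show 2 * m / 2 = m by omega]
      abel
    · rw [show (2 * m + 1 + 1) / 2 = m + 1 by omega, show (2 * m + 1) / 2 = m by omega,
        show 2 * (m + 1) = 2 * m + 1 + 1 by ring]
      abel

theorem sum_range_pow_nu {R : Type*} [CommSemiring R] (a : R) (n : ℕ) :
    ∑ k ∈ range n, a ^ nu k =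
      a * ∑ k ∈ range (n / 2), a ^ nu k + ∑ k ∈ range ((n + 1) / 2), a ^ nu k := by
  simp only [sum_range_eq_sum_even_add_sum_odd _ n, nu_two_mul, nu_two_mul_add_one, pow_succ,
    mul_sum, mul_comm _ a]
  exact add_comm _ _

theorem eqOn_of_halving_recurrence {R : Type*} (φ : R → R → R) {f g : ℕ → R} (h1 : f 1 = g 1)
    (hf : ∀ n, 2 ≤ n → f n = φ (f (n / 2)) (f ((n + 1) / 2)))
    (hg : ∀ n, 2 ≤ n → g n = φ (g (n / 2)) (g ((n + 1) / 2))) :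
    ∀ n, 1 ≤ n → f n = g n := by
  intro n hn
  induction n using Nat.strong_induction_on with
  | _ n ih =>
    rcases hn.eq_or_lt with rfl | hn
    · exact h1
    rw [hf n hn, hg n hn, ih (n / 2) (by omega) (by omega), ih ((n + 1) / 2) (by omega) (by omega)]

theorem sum_digits_generating_general (α : ℝ)
    (f : ℕ → ℝ) (hf : ∀ n : ℕ, f n = ∑ k ∈ Finset.range n, α ^ nu k)
    (S : ℕ → ℝ) (hS1 : S 1 = 1)
    (hSrec : ∀ n : ℕ, 2 ≤ n → S n = α * S (n / 2) + 1 * S ((n + 1) / 2)) :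
    f 1 = 1 ∧ (∀ n : ℕ, 2 ≤ n → f n = α * f (n / 2) + f ((n + 1) / 2)) ∧
    ∀ n : ℕ, 1 ≤ n → f n = S n := by
  have hrec (n : ℕ) : f n = α * f (n / 2) + f ((n + 1) / 2) := by
    simp only [hf]
    exact sum_range_pow_nu α n
  have hf1 : f 1 = 1 := by simp [hf, nu]
  refine ⟨hf1, fun n _ => hrec n, ?_⟩
  exact eqOn_of_halving_recurrence (fun x y => α * x + 1 * y) (hf1.trans hS1.symm)
    (fun n _ => by rw [one_mul]; exact hrec n) hSrec

/-- The partial sum `f(n) = Σ_{0≤k<n} α^{ν(k)}` satisfies `f(1) = 1` and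
`f(n) = α f(⌊n/2⌋) + f(⌈n/2⌉)` for `n ≥ 2`; hence `f = S_{α,1}`, the solution of
`Λ_{α,1}[S] = 0` with `S(1) = 1`. -/
theorem sum_digits_generating (α : ℝ) (hα : 0 < α)
    (f : ℕ → ℝ) (hf : ∀ n : ℕ, f n = ∑ k ∈ Finset.range n, α ^ nu k)
    (S : ℕ → ℝ) (hS1 : S 1 = 1)
    (hSrec : ∀ n : ℕ, 2 ≤ n → S n = α * S (n / 2) + 1 * S ((n + 1) / 2)) :
    f 1 = 1 ∧ (∀ n : ℕ, 2 ≤ n → f n = α * f (n / 2) + f ((n + 1) / 2)) ∧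
    ∀ n : ℕ, 1 ≤ n → f n = S n :=
  sum_digits_generating_general α f hf S hS1 hSrec
end

section
/- Let α ≠ 1/2 be real, L_k := ⌊log₂ k⌋, and f(n) := Σ_{1 ≤ k < n} α^{L_k}. Then f(n) = (S_{α,α}(n) − 1)/(2α − 1) for all n ≥ 1, where S_{α,α}(1)=1 and S_{α,α}(n) = α(S_{α,α}(⌊n/2⌋) + S_{α,α}(⌈n/2⌉)) for n ≥ 2. -/
/-!
Write `f` for the sum. Passing from `n` to `n + 1` adds `α ^ log₂ n` to `f n` and
`α * α ^ log₂ (n / 2)` to the right side of `f n = α (f ⌊n/2⌋ + f ⌈n/2⌉) + 1`, and these agree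
because `log₂ n = log₂ ⌊n/2⌋ + 1` for `n ≥ 2`. Hence `(2α - 1) f + 1` satisfies the same halving
recursion as `S` with the same value at `1`, and such a solution is unique by strong induction.
-/

open Finset

section HalvingRec

variable {R : Type*} [Mul R] [Add R]

def IsHalvingRec (a : R) (S : ℕ → R) : Prop :=
  ∀ n, 2 ≤ n → S n = a * (S (n / 2) + S ((n + 1) / 2))

theorem IsHalvingRec.eq_of_eq_one {a : R} {S T : ℕ → R} (hS : IsHalvingRec a S)
    (hT : IsHalvingRec a T) (h1 : S 1 = T 1) : ∀ n, 1 ≤ n → S n = T n := by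
  intro n
  induction n using Nat.strong_induction_on with
  | _ n ih =>
    intro hn
    rcases hn.eq_or_lt with rfl | hn2
    · exact h1
    · rw [hS n hn2, hT n hn2, ih (n / 2) (by omega) (by omega),
        ih ((n + 1) / 2) (by omega) (by omega)]

end HalvingRec

section LogPowerSum

variable {R : Type*} [CommSemiring R]

def logPowerSum (a : R) (n : ℕ) : R :=
  ∑ k ∈ Ico 1 n, a ^ Nat.log 2 k

theorem logPowerSum_succ (a : R) {n : ℕ} (hn : 1 ≤ n) :
    logPowerSum a (n + 1) = logPowerSum a n + a ^ Nat.log 2 n :=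
  sum_Ico_succ_top hn _

theorem logPowerSum_halving (a : R) {n : ℕ} (hn : 2 ≤ n) :
    logPowerSum a n = a * (logPowerSum a (n / 2) + logPowerSum a ((n + 1) / 2)) + 1 := by
  induction n, hn using Nat.le_induction with
  | base => simp [logPowerSum]
  | succ n hn ih =>
    have hhalf : (n + 1 + 1) / 2 = n / 2 + 1 := by omega
    have hlog : Nat.log 2 n = Nat.log 2 (n / 2) + 1 := by
      have := Nat.log_div_base 2 n
      have := Nat.log_pos (b := 2) (by norm_num) hn
      omega
    rw [logPowerSum_succ a (by omega), hhalf, logPowerSum_succ a (by omega), ih, hlog]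
    ring

end LogPowerSum

theorem isHalvingRec_logPowerSum_affine {R : Type*} [CommRing R] (a : R) :
    IsHalvingRec a fun n => (2 * a - 1) * logPowerSum a n + 1 := by
  intro n hn
  simp only [logPowerSum_halving a hn]
  ring

/-- For real `α ≠ 1/2`, the partial sum `f(n) = Σ_{1≤k<n} α^{⌊log₂ k⌋}` satisfies
`f(n) = (S_{α,α}(n) − 1)/(2α − 1)` for all `n ≥ 1`, where `S_{α,α}(1) = 1` and
`S_{α,α}(n) = α(S_{α,α}(⌊n/2⌋) + S_{α,α}(⌈n/2⌉))` for `n ≥ 2`. -/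
theorem sum_log_powers (α : ℝ) (hα : α ≠ 1 / 2)
    (f : ℕ → ℝ) (hf : ∀ n : ℕ, f n = ∑ k ∈ Finset.Ico 1 n, α ^ Nat.log 2 k)
    (S : ℕ → ℝ) (hS1 : S 1 = 1)
    (hSrec : ∀ n : ℕ, 2 ≤ n → S n = α * (S (n / 2) + S ((n + 1) / 2))) :
    ∀ n : ℕ, 1 ≤ n → f n = (S n - 1) / (2 * α - 1) := by
  have hα' : 2 * α - 1 ≠ 0 := fun h => hα (by linarith)
  have hf' : f = logPowerSum α := funext hf
  have hS : ∀ n, 1 ≤ n → S n = (2 * α - 1) * logPowerSum α n + 1 :=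
    IsHalvingRec.eq_of_eq_one hSrec (isHalvingRec_logPowerSum_affine α)
      (by simp [hS1, logPowerSum])
  intro n hn
  rw [hS n hn, hf', add_sub_cancel_right, mul_div_cancel_left₀ _ hα']
end

section
/- For α > 0 define P₀(t) := (1 + (2α − 1)(2^{{t}} − 1))·(2α)^{−{t}}, where {t} is the fractional part. Then the solution of f(1)=1, f(n) = α f(⌊n/2⌋) + α f(⌈n/2⌉) (n ≥ 2) satisfies f(n) = n^{log₂(2α)} P₀(log₂ n); in particular, for α = 2, f(n) = n² · 2^{−{log₂ n}}(3 − 2^{1−{log₂ n}}) = 2^{L_n}(3n − 2^{L_n+1}) with L_n = ⌊log₂ n⌋. -/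
/-! On each dyadic block `2^k ≤ n ≤ 2^(k+1)` the solution is the affine function
`(2α - 1) α^k n + (2 - 2α) (2α)^k`: the two halves of such an `n` lie in the previous block, and
`α` times the sum of the two affine values at `a` and `b` is the next block's value at `a + b`.
Writing `n = 2^(k + {log₂ n})` turns the affine piece into `n^{log₂(2α)} P₀(log₂ n)`. -/

open Real

section DyadicPiece

variable {R : Type*} [CommRing R]

def dyadicPiece (α : R) (k : ℕ) (x : R) : R :=
  (2 * α - 1) * x * α ^ k + (2 - 2 * α) * (2 * α) ^ k

theorem mul_dyadicPiece_add_mul_dyadicPiece (α : R) (k : ℕ) (x y : R) :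
    α * dyadicPiece α k x + α * dyadicPiece α k y = dyadicPiece α (k + 1) (x + y) := by
  simp only [dyadicPiece, pow_succ, mul_pow]
  ring

theorem eq_dyadicPiece_of_mem_Icc (α : R) {f : ℕ → R} (hf1 : f 1 = 1)
    (hfrec : ∀ n : ℕ, 2 ≤ n → f n = α * f (n / 2) + α * f ((n + 1) / 2)) :
    ∀ k n : ℕ, 2 ^ k ≤ n → n ≤ 2 ^ (k + 1) → f n = dyadicPiece α k n := by
  intro k
  induction k with
  | zero =>
    intro n hn₁ hn₂
    obtain rfl | rfl : n = 1 ∨ n = 2 := by omega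
    · rw [hf1, dyadicPiece]
      push_cast
      ring
    · rw [hfrec 2 le_rfl]
      simp only [dyadicPiece, Nat.reduceDiv, hf1]
      push_cast
      ring
  | succ k ih =>
    intro n hn₁ hn₂
    have hpos : 1 ≤ 2 ^ k := Nat.one_le_two_pow
    have hpow : 2 ^ (k + 1) = 2 * 2 ^ k := pow_succ' 2 k
    have hpow' : 2 ^ (k + 2) = 2 * 2 ^ (k + 1) := pow_succ' 2 (k + 1)
    have hhalves : ((n / 2 + (n + 1) / 2 : ℕ) : R) = n := by congr 1; omega
    rw [hfrec n (by omega), ih (n / 2) (by omega) (by omega),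
      ih ((n + 1) / 2) (by omega) (by omega), mul_dyadicPiece_add_mul_dyadicPiece,
      ← Nat.cast_add, hhalves]

theorem eq_dyadicPiece_log (α : R) {f : ℕ → R} (hf1 : f 1 = 1)
    (hfrec : ∀ n : ℕ, 2 ≤ n → f n = α * f (n / 2) + α * f ((n + 1) / 2))
    {n : ℕ} (hn : n ≠ 0) : f n = dyadicPiece α (Nat.log 2 n) n :=
  eq_dyadicPiece_of_mem_Icc α hf1 hfrec _ n (Nat.pow_log_le_self 2 hn)
    (Nat.lt_pow_succ_log_self one_lt_two n).le

end DyadicPiece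

theorem Real.fract_logb_natCast (b n : ℕ) : Int.fract (logb b n) = logb b n - Nat.log b n := by
  rw [Int.fract, floor_logb_natCast n.cast_nonneg, Int.log_natCast, Int.cast_natCast]

theorem two_rpow_fract_logb_natCast {n : ℕ} (hn : n ≠ 0) :
    (2 : ℝ) ^ Int.fract (logb 2 n) = n / 2 ^ Nat.log 2 n := by
  have h := fract_logb_natCast 2 n
  push_cast at h
  rw [h, rpow_sub two_pos, rpow_logb two_pos (by norm_num) (by positivity), rpow_natCast]

theorem natCast_rpow_logb_mul_rpow_neg_fract {β : ℝ} (hβ : 0 < β) {n : ℕ} (hn : n ≠ 0) :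
    (n : ℝ) ^ logb 2 β * β ^ (-Int.fract (logb 2 n)) = β ^ Nat.log 2 n := by
  have h := fract_logb_natCast 2 n
  push_cast at h
  have hcomm : (n : ℝ) ^ logb 2 β = β ^ logb 2 n := by
    conv_lhs => rw [← rpow_logb two_pos (by norm_num) (by positivity : (0 : ℝ) < n)]
    rw [← rpow_mul zero_le_two, mul_comm, rpow_mul zero_le_two,
      rpow_logb two_pos (by norm_num) hβ]
  rw [hcomm, ← rpow_add hβ, h, ← rpow_natCast]
  congr 1
  ring

theorem dyadicPiece_log_eq_rpow_mul {α : ℝ} (hα : 0 < α) {n : ℕ} (hn : n ≠ 0) :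
    dyadicPiece α (Nat.log 2 n) n
      = (n : ℝ) ^ logb 2 (2 * α)
        * ((1 + (2 * α - 1) * ((2 : ℝ) ^ Int.fract (logb 2 n) - 1))
          * (2 * α) ^ (-Int.fract (logb 2 n))) := by
  rw [mul_left_comm, natCast_rpow_logb_mul_rpow_neg_fract (by positivity) hn,
    two_rpow_fract_logb_natCast hn, dyadicPiece, mul_pow]
  field_simp
  ring

theorem dyadicPiece_two (k : ℕ) (x : ℝ) :
    dyadicPiece 2 k x = 2 ^ k * (3 * x - 2 ^ (k + 1)) := by
  rw [dyadicPiece, mul_pow]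
  ring

/-- For `α > 0`, the solution of `f(1) = 1`, `f(n) = α f(⌊n/2⌋) + α f(⌈n/2⌉)` (`n ≥ 2`)
satisfies `f(n) = n^{log₂(2α)} P₀(log₂ n)` with
`P₀(t) = (1 + (2α−1)(2^{{t}} − 1))·(2α)^{−{t}}`; in particular, for `α = 2`,
`f(n) = 2^{L_n}(3n − 2^{L_n+1})` where `L_n = ⌊log₂ n⌋`. -/
theorem equal_weights_solution (α : ℝ) (hα : 0 < α)
    (f : ℕ → ℝ) (hf1 : f 1 = 1)
    (hfrec : ∀ n : ℕ, 2 ≤ n → f n = α * f (n / 2) + α * f ((n + 1) / 2))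
    (P₀ : ℝ → ℝ)
    (hP₀ : ∀ t : ℝ, P₀ t
      = (1 + (2 * α - 1) * ((2 : ℝ) ^ Int.fract t - 1)) * (2 * α) ^ (-(Int.fract t))) :
    (∀ n : ℕ, 1 ≤ n →
      f n = (n : ℝ) ^ Real.logb 2 (2 * α) * P₀ (Real.logb 2 (n : ℝ))) ∧
    (α = 2 → ∀ n : ℕ, 1 ≤ n →
      f n = (2 : ℝ) ^ Nat.log 2 n * (3 * (n : ℝ) - 2 ^ (Nat.log 2 n + 1))) := by
  refine ⟨fun n hn => ?_, fun hα2 n hn => ?_⟩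
  · rw [eq_dyadicPiece_log α hf1 hfrec (by omega), hP₀,
      dyadicPiece_log_eq_rpow_mul hα (by omega)]
  · subst hα2
    rw [eq_dyadicPiece_log 2 hf1 hfrec (by omega), dyadicPiece_two]
end

section
/- Let α, β > 0 be real numbers with β ≥ α and β ≥ 1 (or alternatively α ≥ β and α + β ≤ 1). Define u(1) = 1 and u(n) = min_{1 ≤ k ≤ ⌊n/2⌋} (α u(k) + β u(n−k)) for n ≥ 2. Then the minimum is attained at k = ⌊n/2⌋; i.e., u(n) = α u(⌊n/2⌋) + β u(⌈n/2⌉) for all n ≥ 2, so u(n) = S_{α,β}(n). -/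
/-! Put `D n = S (n + 1) - S n`. The recursion gives `D 1 = α + β - 1`, `D (2t) = β D t`
and `D (2t + 1) = α D t`, so each `D n`, and hence each `S n - 1`, is `α + β - 1` times a
nonnegative number. The hypotheses on `α, β` make `β - α` and `β - 1` have the sign of
`α + β - 1`; this yields the convexity `α D q ≤ β D (q + 1)` and the case `k = 1`,
`S (n + 1) ≤ α + β S n`. The inequality `S n ≤ α S k + β S (n - k)` for `2k ≤ n` then follows
by induction on `n`: after splitting `n` and `k` by parity, the recursion expresses all three
terms through values at about half the size. So halving is optimal and the minimum recursion
`u` coincides with `S`. -/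

theorem Nat.binary_induction_from_one {motive : ∀ n : ℕ, 1 ≤ n → Prop}
    (one : motive 1 le_rfl)
    (two_mul : ∀ t (ht : 1 ≤ t), motive t ht → motive (2 * t) (by omega))
    (two_mul_add_one : ∀ t (ht : 1 ≤ t), motive t ht → motive (2 * t + 1) (by omega)) :
    ∀ n (hn : 1 ≤ n), motive n hn := by
  intro n
  induction n using Nat.strong_induction_on with
  | _ n ih =>
    intro hn
    obtain ⟨t, rfl | rfl⟩ := Nat.even_or_odd' n
    · exact two_mul t (by omega) (ih t (by omega) _)
    · rcases Nat.eq_zero_or_pos t with rfl | ht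
      · exact one
      · exact two_mul_add_one t ht (ih t (by omega) _)

def HalvingRecurrence (α β : ℝ) (S : ℕ → ℝ) : Prop :=
  ∀ n : ℕ, 2 ≤ n → S n = α * S (n / 2) + β * S ((n + 1) / 2)

namespace HalvingRecurrence

variable {α β : ℝ} {S : ℕ → ℝ}

theorem apply_two_mul (hS : HalvingRecurrence α β S) {t : ℕ} (ht : 1 ≤ t) :
    S (2 * t) = (α + β) * S t := by
  rw [hS _ (by omega), show 2 * t / 2 = t by omega, show (2 * t + 1) / 2 = t by omega]
  ring

theorem apply_two_mul_add_one (hS : HalvingRecurrence α β S) {t : ℕ} (ht : 1 ≤ t) :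
    S (2 * t + 1) = α * S t + β * S (t + 1) := by
  rw [hS _ (by omega), show (2 * t + 1) / 2 = t by omega,
    show (2 * t + 1 + 1) / 2 = t + 1 by omega]

theorem apply_two (hS : HalvingRecurrence α β S) (hS1 : S 1 = 1) : S 2 = α + β := by
  simpa [hS1] using hS.apply_two_mul le_rfl

theorem sub_two_mul (hS : HalvingRecurrence α β S) {t : ℕ} (ht : 1 ≤ t) :
    S (2 * t + 1) - S (2 * t) = β * (S (t + 1) - S t) := by
  rw [hS.apply_two_mul_add_one ht, hS.apply_two_mul ht]
  ring

theorem sub_two_mul_add_one (hS : HalvingRecurrence α β S) {t : ℕ} (ht : 1 ≤ t) :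
    S (2 * t + 2) - S (2 * t + 1) = α * (S (t + 1) - S t) := by
  rw [show 2 * t + 2 = 2 * (t + 1) by ring, hS.apply_two_mul (by omega),
    hS.apply_two_mul_add_one ht]
  ring

theorem mul_sub_succ_nonneg (hS : HalvingRecurrence α β S)
    (hα : 0 ≤ α) (hβ : 0 ≤ β) (hS1 : S 1 = 1) {γ : ℝ} (hγ : 0 ≤ γ * (α + β - 1))
    {n : ℕ} (hn : 1 ≤ n) :
    0 ≤ γ * (S (n + 1) - S n) := by
  induction n, hn using Nat.binary_induction_from_one with
  | one => rwa [hS.apply_two hS1, hS1]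
  | two_mul t ht ih =>
    rw [hS.sub_two_mul ht, mul_left_comm]
    exact mul_nonneg hβ ih
  | two_mul_add_one t ht ih =>
    rw [hS.sub_two_mul_add_one ht, mul_left_comm]
    exact mul_nonneg hα ih

theorem mul_sub_one_nonneg (hS : HalvingRecurrence α β S)
    (hα : 0 ≤ α) (hβ : 0 ≤ β) (hS1 : S 1 = 1) {γ : ℝ} (hγ : 0 ≤ γ * (α + β - 1))
    {n : ℕ} (hn : 1 ≤ n) :
    0 ≤ γ * (S n - 1) := by
  induction n, hn using Nat.le_induction with
  | base => simp [hS1]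
  | succ n hn ih =>
    linear_combination ih + hS.mul_sub_succ_nonneg hα hβ hS1 hγ hn

theorem mul_sub_succ_le_mul_sub_succ (hS : HalvingRecurrence α β S)
    (hα : 0 ≤ α) (hβ : 0 ≤ β) (hS1 : S 1 = 1)
    (hβα : 0 ≤ (β - α) * (α + β - 1)) (hβ1 : 0 ≤ (β - 1) * (α + β - 1))
    {q : ℕ} (hq : 1 ≤ q) :
    α * (S (q + 1) - S q) ≤ β * (S (q + 2) - S (q + 1)) := by
  induction q, hq using Nat.binary_induction_from_one with
  | one =>
    have h3 := hS.sub_two_mul le_rfl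
    norm_num [hS.apply_two hS1, hS1] at h3 ⊢
    nlinarith [mul_nonneg hβ hβ1]
  | two_mul t ht ih =>
    rw [hS.sub_two_mul ht, hS.sub_two_mul_add_one ht]
    linarith [mul_left_comm α β (S (t + 1) - S t)]
  | two_mul_add_one t ht ih =>
    have hsign := hS.mul_sub_succ_nonneg hα hβ hS1 hβα (n := t + 1) (by omega)
    rw [show 2 * t + 1 + 1 = 2 * t + 2 from rfl, show 2 * t + 1 + 2 = 2 * (t + 1) + 1 by ring,
      hS.sub_two_mul_add_one ht, show 2 * t + 2 = 2 * (t + 1) by ring, hS.sub_two_mul (by omega)]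
    nlinarith [mul_le_mul_of_nonneg_left ih hα, mul_nonneg hβ hsign]

theorem succ_le_add_mul (hS : HalvingRecurrence α β S)
    (hα : 0 ≤ α) (hβ : 0 ≤ β) (hS1 : S 1 = 1)
    (hβα : 0 ≤ (β - α) * (α + β - 1)) (hβ1 : 0 ≤ (β - 1) * (α + β - 1))
    {n : ℕ} (hn : 1 ≤ n) : S (n + 1) ≤ α + β * S n := by
  induction n, hn using Nat.binary_induction_from_one with
  | one => rw [hS.apply_two hS1, hS1, mul_one]
  | two_mul t ht ih =>
    have hsign := hS.mul_sub_one_nonneg hα hβ hS1 hβ1 ht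
    rw [hS.apply_two_mul_add_one ht, hS.apply_two_mul ht]
    nlinarith [mul_le_mul_of_nonneg_left ih hβ, mul_nonneg hα hsign]
  | two_mul_add_one t ht ih =>
    have hsign := hS.mul_sub_one_nonneg hα hβ hS1 hβ1 (n := t + 1) (by omega)
    rw [show 2 * t + 1 + 1 = 2 * (t + 1) by ring, hS.apply_two_mul (by omega),
      hS.apply_two_mul_add_one ht]
    nlinarith [mul_le_mul_of_nonneg_left ih hα, mul_nonneg hβ hsign, hβα]

theorem le_mul_add_mul_sub (hS : HalvingRecurrence α β S)
    (hα : 0 ≤ α) (hβ : 0 ≤ β) (hS1 : S 1 = 1)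
    (hβα : 0 ≤ (β - α) * (α + β - 1)) (hβ1 : 0 ≤ (β - 1) * (α + β - 1)) (n : ℕ) :
    ∀ k, 1 ≤ k → 2 * k ≤ n → S n ≤ α * S k + β * S (n - k) := by
  induction n using Nat.strong_induction_on with
  | _ n ih =>
  intro k hk hkn
  have hαβ : 0 ≤ α + β := add_nonneg hα hβ
  rcases hk.eq_or_lt with rfl | hk
  · have h := hS.succ_le_add_mul hα hβ hS1 hβα hβ1 (n := n - 1) (by omega)
    rwa [show n - 1 + 1 = n by omega, ← mul_one α, ← hS1] at h
  obtain ⟨j, rfl | rfl⟩ := Nat.even_or_odd' k <;> obtain ⟨m, rfl | rfl⟩ := Nat.even_or_odd' n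
  · have h := ih m (by omega) j (by omega) (by omega)
    rw [show 2 * m - 2 * j = 2 * (m - j) by omega, hS.apply_two_mul (by omega),
      hS.apply_two_mul (by omega), hS.apply_two_mul (by omega)]
    nlinarith [mul_le_mul_of_nonneg_left h hαβ]
  · have h₁ := ih m (by omega) j (by omega) (by omega)
    have h₂ := ih (m + 1) (by omega) j (by omega) (by omega)
    rw [show m + 1 - j = m - j + 1 by omega] at h₂
    rw [show 2 * m + 1 - 2 * j = 2 * (m - j) + 1 by omega, hS.apply_two_mul_add_one (by omega),
      hS.apply_two_mul (by omega), hS.apply_two_mul_add_one (by omega)]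
    nlinarith [mul_le_mul_of_nonneg_left h₁ hα, mul_le_mul_of_nonneg_left h₂ hβ]
  · -- `(α + β) S m ≤ α S (m - 1) + β S (m + 1)` by convexity; induct at `m - 1` and `m + 1`
    have h₁ := ih (m - 1) (by omega) j (by omega) (by omega)
    have h₂ := ih (m + 1) (by omega) (j + 1) (by omega) (by omega)
    have hconv := hS.mul_sub_succ_le_mul_sub_succ hα hβ hS1 hβα hβ1 (q := m - 1) (by omega)
    rw [show m + 1 - (j + 1) = m - 1 - j + 1 by omega] at h₂
    rw [show m - 1 + 1 = m by omega, show m - 1 + 2 = m + 1 by omega] at hconv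
    rw [show 2 * m - (2 * j + 1) = 2 * (m - 1 - j) + 1 by omega, hS.apply_two_mul (by omega),
      hS.apply_two_mul_add_one (by omega), hS.apply_two_mul_add_one (by omega)]
    nlinarith [mul_le_mul_of_nonneg_left h₁ hα, mul_le_mul_of_nonneg_left h₂ hβ]
  · have h₁ := ih m (by omega) j (by omega) (by omega)
    have h₂ := ih (m + 1) (by omega) (j + 1) (by omega) (by omega)
    rw [show m + 1 - (j + 1) = m - j by omega] at h₂
    rw [show 2 * m + 1 - (2 * j + 1) = 2 * (m - j) by omega, hS.apply_two_mul_add_one (by omega),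
      hS.apply_two_mul_add_one (by omega), hS.apply_two_mul (by omega)]
    nlinarith [mul_le_mul_of_nonneg_left h₁ hα, mul_le_mul_of_nonneg_left h₂ hβ]

theorem eq_of_isLeast (hS : HalvingRecurrence α β S) (hS1 : S 1 = 1)
    (hle : ∀ n k, 1 ≤ k → 2 * k ≤ n → S n ≤ α * S k + β * S (n - k))
    {u : ℕ → ℝ} (hu1 : u 1 = 1)
    (hu : ∀ n : ℕ, 2 ≤ n →
      IsLeast {x : ℝ | ∃ k : ℕ, 1 ≤ k ∧ k ≤ n / 2 ∧ x = α * u k + β * u (n - k)} (u n)) :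
    ∀ n, 1 ≤ n → u n = S n := by
  intro n
  induction n using Nat.strong_induction_on with
  | _ n ih =>
  intro hn
  rcases hn.eq_or_lt with rfl | hn
  · rw [hu1, hS1]
  obtain ⟨⟨k, hk, hkn, hk_eq⟩, hlower⟩ := hu n hn
  have h_half : u n ≤ α * u (n / 2) + β * u (n - n / 2) :=
    hlower ⟨n / 2, by omega, le_rfl, rfl⟩
  have hSn : S n = α * S (n / 2) + β * S (n - n / 2) := by
    rw [show n - n / 2 = (n + 1) / 2 by omega]
    exact hS n hn
  rw [ih (n / 2) (by omega) (by omega), ih (n - n / 2) (by omega) (by omega), ← hSn] at h_half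
  rw [ih k (by omega) hk, ih (n - k) (by omega) (by omega)] at hk_eq
  linarith [hle n k hk (by omega)]

end HalvingRecurrence

open HalvingRecurrence in
/-- Let `α, β > 0` with (`β ≥ α` and `β ≥ 1`) or (`α ≥ β` and `α+β ≤ 1`).  If
`u(1) = 1` and `u(n) = min_{1≤k≤⌊n/2⌋}(α u(k) + β u(n−k))` for `n ≥ 2`, then the
minimum is attained at `k = ⌊n/2⌋`, i.e. `u(n) = α u(⌊n/2⌋) + β u(⌈n/2⌉)`, and
`u = S_{α,β}`. -/
theorem min_recurrence (α β : ℝ) (hα : 0 < α) (hβ : 0 < β)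
    (hcase : (α ≤ β ∧ 1 ≤ β) ∨ (β ≤ α ∧ α + β ≤ 1))
    (u : ℕ → ℝ) (hu1 : u 1 = 1)
    (hurec : ∀ n : ℕ, 2 ≤ n →
      IsLeast {x : ℝ | ∃ k : ℕ, 1 ≤ k ∧ k ≤ n / 2 ∧ x = α * u k + β * u (n - k)} (u n))
    (S : ℕ → ℝ) (hS1 : S 1 = 1)
    (hSrec : ∀ n : ℕ, 2 ≤ n → S n = α * S (n / 2) + β * S ((n + 1) / 2)) :
    (∀ n : ℕ, 2 ≤ n → u n = α * u (n / 2) + β * u ((n + 1) / 2)) ∧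
    ∀ n : ℕ, 1 ≤ n → u n = S n := by
  have hβα : 0 ≤ (β - α) * (α + β - 1) := by
    rcases hcase with ⟨h₁, h₂⟩ | ⟨h₁, h₂⟩ <;> nlinarith
  have hβ1 : 0 ≤ (β - 1) * (α + β - 1) := by
    rcases hcase with ⟨h₁, h₂⟩ | ⟨h₁, h₂⟩ <;> nlinarith
  have hopt := le_mul_add_mul_sub hSrec hα.le hβ.le hS1 hβα hβ1
  have hu := eq_of_isLeast hSrec hS1 hopt hu1 hurec
  refine ⟨fun n hn => ?_, hu⟩
  rw [hu n (by omega), hu (n / 2) (by omega), hu ((n + 1) / 2) (by omega)]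
  exact hSrec n hn
end

section
/- Let α, β > 0 with α ≥ β, β ≤ 1, and α + β ≥ 1. Define u(1)=1 and u(n) = max_{1 ≤ k ≤ ⌊n/2⌋}(α u(k) + β u(n−k)) for n ≥ 2. Then the maximum is attained at k = ⌊n/2⌋, so u(n) = α u(⌊n/2⌋) + β u(⌈n/2⌉) = S_{α,β}(n) for all n ≥ 2. -/
/-!
Write `S` for any solution of the split recurrence. The heart of the matter is the inequality
`α S(k) + β S(l) ≤ S(k + l)` for `1 ≤ k ≤ l`: splitting `n` at the middle is optimal. It is
proved by strong induction on `l`, splitting `k` and `l` by parity, which reduces it to smaller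
instances of itself plus three facts about `S`: monotonicity, the case `k = 1`, and the
discrete concavity `α S(m) + β S(m + 2) ≤ (α + β) S(m + 1)`. Given that inequality, `u = S`
follows by strong induction, since the maximum defining `u(n)` is then attained at the middle.
-/

theorem Nat.pos_evenOdd_induction {P : ℕ → Prop} (one : P 1)
    (even : ∀ j, 1 ≤ j → P j → P (2 * j)) (odd : ∀ j, 1 ≤ j → P j → P (2 * j + 1)) :
    ∀ n, 1 ≤ n → P n := by
  intro n
  induction n using Nat.evenOddRec with
  | h0 => omega
  | h_even j ih => intro hn; exact even j (by omega) (ih (by omega))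
  | h_odd j ih =>
    intro _
    rcases Nat.eq_zero_or_pos j with rfl | hj
    · exact one
    · exact odd j hj (ih hj)

def IsSplitRec (α β : ℝ) (S : ℕ → ℝ) : Prop :=
  ∀ n : ℕ, 2 ≤ n → S n = α * S (n / 2) + β * S ((n + 1) / 2)

namespace IsSplitRec

variable {α β : ℝ} {S : ℕ → ℝ}

theorem apply_two_mul (hS : IsSplitRec α β S) {j : ℕ} (hj : 1 ≤ j) :
    S (2 * j) = (α + β) * S j := by
  rw [hS (2 * j) (by omega), show 2 * j / 2 = j by omega, show (2 * j + 1) / 2 = j by omega]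
  ring

theorem apply_two_mul_add_one (hS : IsSplitRec α β S) {j : ℕ} (hj : 1 ≤ j) :
    S (2 * j + 1) = α * S j + β * S (j + 1) := by
  rw [hS (2 * j + 1) (by omega), show (2 * j + 1) / 2 = j by omega,
    show (2 * j + 1 + 1) / 2 = j + 1 by omega]

theorem apply_two (hS : IsSplitRec α β S) (hS1 : S 1 = 1) : S 2 = α + β := by
  simpa [hS1] using hS.apply_two_mul le_rfl

theorem one_le (hS : IsSplitRec α β S) (hS1 : S 1 = 1) (hα : 0 ≤ α) (hβ : 0 ≤ β)
    (hab : 1 ≤ α + β) {n : ℕ} (hn : 1 ≤ n) : 1 ≤ S n := by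
  induction n using Nat.strong_induction_on with
  | _ n ih =>
    rcases hn.eq_or_lt with rfl | hn
    · exact hS1.ge
    · have h₁ := ih (n / 2) (by omega) (by omega)
      have h₂ := ih ((n + 1) / 2) (by omega) (by omega)
      rw [hS n hn]
      nlinarith

theorem le_succ (hS : IsSplitRec α β S) (hS1 : S 1 = 1) (hα : 0 ≤ α) (hβ : 0 ≤ β)
    (hab : 1 ≤ α + β) {n : ℕ} (hn : 1 ≤ n) : S n ≤ S (n + 1) := by
  refine Nat.pos_evenOdd_induction (P := fun n ↦ S n ≤ S (n + 1)) ?_ ?_ ?_ n hn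
  · rw [hS.apply_two hS1, hS1]
    exact hab
  · intro j hj ih
    rw [hS.apply_two_mul hj, hS.apply_two_mul_add_one hj]
    nlinarith
  · intro j hj ih
    rw [show 2 * j + 1 + 1 = 2 * (j + 1) by ring, hS.apply_two_mul_add_one hj,
      hS.apply_two_mul (by omega)]
    nlinarith

theorem add_le_apply_succ (hS : IsSplitRec α β S) (hS1 : S 1 = 1) (hα : 0 ≤ α) (hβ : 0 ≤ β)
    (hba : β ≤ α) (hb1 : β ≤ 1) (hab : 1 ≤ α + β) {n : ℕ} (hn : 1 ≤ n) :
    α + β * S n ≤ S (n + 1) := by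
  refine Nat.pos_evenOdd_induction (P := fun n ↦ α + β * S n ≤ S (n + 1)) ?_ ?_ ?_ n hn
  · rw [hS.apply_two hS1, hS1, mul_one]
  · intro j hj ih
    have hSj := hS.one_le hS1 hα hβ hab hj
    rw [hS.apply_two_mul hj, hS.apply_two_mul_add_one hj]
    nlinarith [mul_nonneg (mul_nonneg hα (sub_nonneg.2 hb1)) (sub_nonneg.2 hSj)]
  · intro j hj ih
    have hSj := hS.one_le hS1 hα hβ hab (show 1 ≤ j + 1 by omega)
    rw [show 2 * j + 1 + 1 = 2 * (j + 1) by ring, hS.apply_two_mul_add_one hj,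
      hS.apply_two_mul (by omega)]
    -- `α ≤ α² + β(1 - β)` because `α² - α + β - β² = (α - β)(α + β - 1)`
    nlinarith [mul_nonneg (sub_nonneg.2 hba) (sub_nonneg.2 hab),
      mul_nonneg (mul_nonneg hβ (sub_nonneg.2 hb1)) (sub_nonneg.2 hSj)]

theorem concave (hS : IsSplitRec α β S) (hS1 : S 1 = 1) (hα : 0 ≤ α) (hβ : 0 ≤ β)
    (hba : β ≤ α) (hb1 : β ≤ 1) (hab : 1 ≤ α + β) {m : ℕ} (hm : 1 ≤ m) :
    α * S m + β * S (m + 2) ≤ (α + β) * S (m + 1) := by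
  refine Nat.pos_evenOdd_induction
    (P := fun m ↦ α * S m + β * S (m + 2) ≤ (α + β) * S (m + 1)) ?_ ?_ ?_ m hm
  · have h₃ := hS.apply_two_mul_add_one le_rfl
    rw [hS.apply_two hS1, hS1] at h₃
    rw [h₃, hS.apply_two hS1, hS1]
    nlinarith [mul_nonneg (show 0 ≤ α - β * β by nlinarith) (sub_nonneg.2 hab)]
  · intro j hj _
    rw [show 2 * j + 2 = 2 * (j + 1) by ring, hS.apply_two_mul hj, hS.apply_two_mul (by omega),
      hS.apply_two_mul_add_one hj]
    exact le_of_eq (by ring)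
  · intro j hj ih
    have hmono := hS.le_succ hS1 hα hβ hab hj
    rw [show 2 * j + 1 + 1 = 2 * (j + 1) by ring, show 2 * j + 1 + 2 = 2 * (j + 1) + 1 by ring,
      hS.apply_two_mul_add_one hj, hS.apply_two_mul (by omega),
      hS.apply_two_mul_add_one (by omega)]
    nlinarith [mul_le_mul_of_nonneg_left ih hβ,
      mul_le_mul_of_nonneg_left hmono (mul_nonneg hα (sub_nonneg.2 hba))]

theorem weighted_add_le (hS : IsSplitRec α β S) (hS1 : S 1 = 1) (hα : 0 ≤ α) (hβ : 0 ≤ β)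
    (hba : β ≤ α) (hb1 : β ≤ 1) (hab : 1 ≤ α + β) {k l : ℕ} (hk : 1 ≤ k) (hkl : k ≤ l) :
    α * S k + β * S l ≤ S (k + l) := by
  induction l using Nat.strong_induction_on generalizing k with
  | _ l ih =>
    obtain ⟨a, rfl | rfl⟩ := Nat.even_or_odd' k <;> obtain ⟨b, rfl | rfl⟩ := Nat.even_or_odd' l
    · have h₁ := ih b (by omega) (k := a) (by omega) (by omega)
      rw [← mul_add, hS.apply_two_mul (by omega), hS.apply_two_mul (by omega),
        hS.apply_two_mul (by omega)]
      nlinarith [mul_le_mul_of_nonneg_left h₁ (add_nonneg hα hβ)]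
    · have h₁ := ih b (by omega) (k := a) (by omega) (by omega)
      have h₂ := ih (b + 1) (by omega) (k := a) (by omega) (by omega)
      rw [show 2 * a + (2 * b + 1) = 2 * (a + b) + 1 by ring, hS.apply_two_mul (by omega),
        hS.apply_two_mul_add_one (by omega), hS.apply_two_mul_add_one (by omega),
        show a + b + 1 = a + (b + 1) by ring]
      nlinarith [mul_le_mul_of_nonneg_left h₁ hα, mul_le_mul_of_nonneg_left h₂ hβ]
    · rcases Nat.eq_zero_or_pos a with rfl | ha
      · simpa [hS1, add_comm] using
          hS.add_le_apply_succ hS1 hα hβ hba hb1 hab (n := 2 * b) (by omega)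
      have h₁ := ih b (by omega) (k := a) ha (by omega)
      have h₂ := ih b (by omega) (k := a + 1) (by omega) (by omega)
      rw [show 2 * a + 1 + 2 * b = 2 * (a + b) + 1 by ring, hS.apply_two_mul (by omega),
        hS.apply_two_mul_add_one ha, hS.apply_two_mul_add_one (by omega),
        show a + b + 1 = a + 1 + b by ring]
      nlinarith [mul_le_mul_of_nonneg_left h₁ hα, mul_le_mul_of_nonneg_left h₂ hβ]
    · rcases Nat.eq_zero_or_pos a with rfl | ha
      · simpa [hS1, add_comm] using
          hS.add_le_apply_succ hS1 hα hβ hba hb1 hab (n := 2 * b + 1) (by omega)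
      have h₁ := ih b (by omega) (k := a) ha (by omega)
      have h₂ := ih (b + 1) (by omega) (k := a + 1) (by omega) (by omega)
      have hconc := hS.concave hS1 hα hβ hba hb1 hab (m := a + b) (by omega)
      rw [show 2 * a + 1 + (2 * b + 1) = 2 * (a + b + 1) by ring,
        hS.apply_two_mul (by omega), hS.apply_two_mul_add_one ha,
        hS.apply_two_mul_add_one (by omega)]
      rw [show a + 1 + (b + 1) = a + b + 2 by ring] at h₂
      -- the left side regroups exactly as `α (α S a + β S b) + β (α S (a+1) + β S (b+1))`
      nlinarith [mul_le_mul_of_nonneg_left h₁ hα, mul_le_mul_of_nonneg_left h₂ hβ]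

theorem eq_of_isGreatest (hS : IsSplitRec α β S) (hS1 : S 1 = 1)
    (hsplit : ∀ k l : ℕ, 1 ≤ k → k ≤ l → α * S k + β * S l ≤ S (k + l))
    {u : ℕ → ℝ} (hu1 : u 1 = 1)
    (hurec : ∀ n : ℕ, 2 ≤ n →
      IsGreatest {x : ℝ | ∃ k : ℕ, 1 ≤ k ∧ k ≤ n / 2 ∧ x = α * u k + β * u (n - k)} (u n))
    {n : ℕ} (hn : 1 ≤ n) : u n = S n := by
  induction n using Nat.strong_induction_on with
  | _ n ih =>
    rcases hn.eq_or_lt with rfl | hn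
    · rw [hu1, hS1]
    obtain ⟨⟨k, hk, hkn, hx⟩, hmax⟩ := hurec n hn
    have hle : u n ≤ S n := by
      rw [hx, ih k (by omega) hk, ih (n - k) (by omega) (by omega)]
      simpa [Nat.add_sub_cancel' (show k ≤ n by omega)] using hsplit k (n - k) hk (by omega)
    have hge : S n ≤ u n := by
      have hmid := hmax ⟨n / 2, by omega, le_rfl, rfl⟩
      rwa [show n - n / 2 = (n + 1) / 2 by omega, ih (n / 2) (by omega) (by omega),
        ih ((n + 1) / 2) (by omega) (by omega), ← hS n hn] at hmid
    exact hle.antisymm hge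

end IsSplitRec

/-- Let `α, β > 0` with `α ≥ β`, `β ≤ 1`, `α + β ≥ 1`.  If `u(1) = 1` and
`u(n) = max_{1≤k≤⌊n/2⌋}(α u(k) + β u(n−k))` for `n ≥ 2`, then the maximum is
attained at `k = ⌊n/2⌋`, i.e. `u(n) = α u(⌊n/2⌋) + β u(⌈n/2⌉)`, and `u = S_{α,β}`. -/
theorem max_recurrence (α β : ℝ) (hα : 0 < α) (hβ : 0 < β)
    (hba : β ≤ α) (hb1 : β ≤ 1) (hab : 1 ≤ α + β)
    (u : ℕ → ℝ) (hu1 : u 1 = 1)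
    (hurec : ∀ n : ℕ, 2 ≤ n →
      IsGreatest {x : ℝ | ∃ k : ℕ, 1 ≤ k ∧ k ≤ n / 2 ∧ x = α * u k + β * u (n - k)} (u n))
    (S : ℕ → ℝ) (hS1 : S 1 = 1)
    (hSrec : ∀ n : ℕ, 2 ≤ n → S n = α * S (n / 2) + β * S ((n + 1) / 2)) :
    (∀ n : ℕ, 2 ≤ n → u n = α * u (n / 2) + β * u ((n + 1) / 2)) ∧
    ∀ n : ℕ, 1 ≤ n → u n = S n := by
  have hS : IsSplitRec α β S := hSrec
  have hsplit : ∀ k l : ℕ, 1 ≤ k → k ≤ l → α * S k + β * S l ≤ S (k + l) :=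
    fun _ _ hk hkl ↦ hS.weighted_add_le hS1 hα.le hβ.le hba hb1 hab hk hkl
  have huS : ∀ n : ℕ, 1 ≤ n → u n = S n := fun _ hn ↦ hS.eq_of_isGreatest hS1 hsplit hu1 hurec hn
  refine ⟨fun n hn ↦ ?_, huS⟩
  rw [huS n (by omega), huS (n / 2) (by omega), huS ((n + 1) / 2) (by omega)]
  exact hSrec n hn
end

section
/- For every n ≥ 1 there exists a bijection h : {1,…,n} → {n+1,…,2n} such that for each k, h(k) − k is a power of 2 (i.e., h(k) = k + 2^{j} for some j ≥ 0 depending on k). Likewise there exists a bijection from {1,…,n} to {n+2,…,2n+1} with the same property. -/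
/-!
Match `[a, a + n)` onto `[a + n + ε, a + 2n + ε)`, `ε ∈ {0, 1}`, by induction on `n`. Pick a
power of two `2^j ∈ [n + ε, 2n + ε)` and split off the initial segment of length
`t = 2n + ε - 2^j`: translation by `2^j` carries it onto the final segment of the target, and the
leftover source `[a + t, a + n)` and target `[a + n + ε, a + 2^j)` form an instance of the same
problem of size `2^j - n - ε < n`.
-/

open Set

def PowTwoMatchable (s t : Set ℕ) : Prop :=
  ∃ f : ℕ → ℕ, BijOn f s t ∧ ∀ k ∈ s, ∃ j : ℕ, f k = k + 2 ^ j

lemma powTwoMatchable_empty : PowTwoMatchable ∅ ∅ :=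
  ⟨id, bijOn_empty id, fun _ hk => hk.elim⟩

lemma powTwoMatchable_Ico_add_two_pow (a b j : ℕ) :
    PowTwoMatchable (Ico a b) (Ico (a + 2 ^ j) (b + 2 ^ j)) := by
  refine ⟨(· + 2 ^ j), ?_, fun k _ => ⟨j, rfl⟩⟩
  rw [← image_add_const_Ico]
  exact (add_left_injective _).injOn.bijOn_image

lemma PowTwoMatchable.union {s₁ s₂ t₁ t₂ : Set ℕ} (h₁ : PowTwoMatchable s₁ t₁)
    (h₂ : PowTwoMatchable s₂ t₂) (hs : Disjoint s₁ s₂) (ht : Disjoint t₁ t₂) :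
    PowTwoMatchable (s₁ ∪ s₂) (t₁ ∪ t₂) := by
  classical
  obtain ⟨f₁, hbij₁, hpow₁⟩ := h₁
  obtain ⟨f₂, hbij₂, hpow₂⟩ := h₂
  have heq₁ : EqOn (s₁.piecewise f₁ f₂) f₁ s₁ := piecewise_eqOn s₁ f₁ f₂
  have heq₂ : EqOn (s₁.piecewise f₁ f₂) f₂ s₂ := fun x hx =>
    piecewise_eq_of_notMem _ _ _ (hs.notMem_of_mem_right hx)
  have hbij₁' := hbij₁.congr heq₁.symm
  have hbij₂' := hbij₂.congr heq₂.symm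
  refine ⟨s₁.piecewise f₁ f₂, hbij₁'.union hbij₂' ?_, ?_⟩
  · exact (injOn_union hs).2 ⟨hbij₁'.injOn, hbij₂'.injOn, fun x hx y hy =>
      ht.ne_of_mem (hbij₁'.mapsTo hx) (hbij₂'.mapsTo hy)⟩
  · rintro k (hk | hk)
    · rw [heq₁ hk]; exact hpow₁ k hk
    · rw [heq₂ hk]; exact hpow₂ k hk

lemma exists_two_pow_mem_Ico {n ε : ℕ} (hn : n ≠ 0) (hε : ε ≤ 1) :
    ∃ j : ℕ, 2 ^ j ∈ Ico (n + ε) (2 * n + ε) := by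
  have hpos : 2 * n + ε - 1 ≠ 0 := by omega
  have hle := Nat.pow_log_le_self 2 hpos
  have hlt := Nat.lt_pow_succ_log_self one_lt_two (2 * n + ε - 1)
  rw [pow_succ] at hlt
  exact ⟨Nat.log 2 (2 * n + ε - 1), by omega, by omega⟩

theorem powTwoMatchable_Ico {ε : ℕ} (hε : ε ≤ 1) (n a : ℕ) :
    PowTwoMatchable (Ico a (a + n)) (Ico (a + n + ε) (a + 2 * n + ε)) := by
  induction n using Nat.strong_induction_on generalizing a with
  | _ n ih =>
  rcases eq_or_ne n 0 with rfl | hn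
  · simpa using powTwoMatchable_empty
  obtain ⟨j, hj_lo, hj_hi⟩ := exists_two_pow_mem_Ico hn hε
  obtain ⟨t, n', rfl, hP⟩ : ∃ t n', n = t + n' ∧ 2 ^ j = t + 2 * n' + ε :=
    ⟨2 * n + ε - 2 ^ j, 2 ^ j - n - ε, by omega, by omega⟩
  have hsrc : Ico a (a + (t + n')) = Ico a (a + t) ∪ Ico (a + t) (a + t + n') := by
    ext; simp only [mem_union, mem_Ico]; omega
  have htgt : Ico (a + (t + n') + ε) (a + 2 * (t + n') + ε) =
      Ico (a + 2 ^ j) (a + t + 2 ^ j) ∪ Ico (a + t + n' + ε) (a + t + 2 * n' + ε) := by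
    ext; simp only [mem_union, mem_Ico]; omega
  rw [hsrc, htgt]
  refine (powTwoMatchable_Ico_add_two_pow a (a + t) j).union (ih n' (by omega) (a + t))
    Ico_disjoint_Ico_same (disjoint_left.2 fun x hx hx' => ?_)
  simp only [mem_Ico] at hx hx'
  omega

theorem pairing_powers_of_two_general (n : ℕ) :
    (∃ h₁ : ℕ → ℕ,
      Set.BijOn h₁ (Set.Icc 1 n) (Set.Icc (n + 1) (2 * n)) ∧
      ∀ k ∈ Set.Icc 1 n, ∃ j : ℕ, h₁ k = k + 2 ^ j) ∧
    (∃ h₂ : ℕ → ℕ,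
      Set.BijOn h₂ (Set.Icc 1 n) (Set.Icc (n + 2) (2 * n + 1)) ∧
      ∀ k ∈ Set.Icc 1 n, ∃ j : ℕ, h₂ k = k + 2 ^ j) := by
  have hIcc (a b : ℕ) : Icc a b = Ico a (b + 1) := by ext; simp only [mem_Icc, mem_Ico]; omega
  have h₁ : PowTwoMatchable (Icc 1 n) (Icc (n + 1) (2 * n)) := by
    rw [hIcc, hIcc]
    convert powTwoMatchable_Ico zero_le_one n 1 using 2 <;> omega
  have h₂ : PowTwoMatchable (Icc 1 n) (Icc (n + 2) (2 * n + 1)) := by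
    rw [hIcc, hIcc]
    convert powTwoMatchable_Ico le_rfl n 1 using 2 <;> omega
  exact ⟨h₁, h₂⟩

/-- For every `n ≥ 1` there is a bijection `h₁ : {1,…,n} → {n+1,…,2n}` with
`h₁(k) − k` a power of `2` for each `k`, and likewise a bijection
`h₂ : {1,…,n} → {n+2,…,2n+1}` with the same property. -/
theorem pairing_powers_of_two (n : ℕ) (hn : 1 ≤ n) :
    (∃ h₁ : ℕ → ℕ,
      Set.BijOn h₁ (Set.Icc 1 n) (Set.Icc (n + 1) (2 * n)) ∧
      ∀ k ∈ Set.Icc 1 n, ∃ j : ℕ, h₁ k = k + 2 ^ j) ∧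
    (∃ h₂ : ℕ → ℕ,
      Set.BijOn h₂ (Set.Icc 1 n) (Set.Icc (n + 2) (2 * n + 1)) ∧
      ∀ k ∈ Set.Icc 1 n, ∃ j : ℕ, h₂ k = k + 2 ^ j) :=
  pairing_powers_of_two_general n
end
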